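/- arXiv:2210.09696 — 9 statements merged into one kernel-verified Lean document; each statement's English description precedes it below -/
import Mathlib

section
/- Let λ ≥ 0 be a real number, let i₀, i₁ ∈ ℤ² be such that v := i₁ − i₀ is primitive (its coordinates are coprime), and let f, g ∈ k[x^{±1}, y^{±1}] be Laurent polynomials with coefficient families (c_i) and (d_i) satisfying: c_{i₀}, c_{i₁}, d_{i₀}, d_{i₁} ≠ 0; val(c_{i₀}) = val(d_{i₀}); val(c_{i₁}) = val(d_{i₁}); and for every n ∈ ℤ∖{0,1}, val(c_{i₀+n·v}) > val(c_{i₀}) + n(val(c_{i₁}) − val(c_{i₀})) and val(d_{i₀+n·v}) > val(d_{i₀}) + n(val(d_{i₁}) − val(d_{i₀})) (with val(0) = ∞). Then there exists a univariate Laurent polynomial h(t) = Σ_s a_s t^s ∈ k[t^{±1}] with val(a_s) > s·(val(c_{i₁}) − val(c_{i₀})) for every s ∈ ℤ, such that the Laurent polynomial g′ := g + h(x^v)·f (where h(x^v) denotes Σ_s a_s x^{s v₁} y^{s v₂}) satisfies: val(g′_{i₀}) = val(d_{i₀}); val(g′_{i₁}) = val(d_{i₁}); and for every n ∈ ℤ∖{0,1},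 val(g′_{i₀+n·v}) > val(d_{i₀}) + n(val(d_{i₁}) − val(d_{i₀})) + λ. -/
section Helpers
variable {k : Type*} [Field k] (val : k → WithTop ℝ)

lemma vzero (hval_top : ∀ a : k, val a = ⊤ ↔ a = 0) : val 0 = ⊤ := (hval_top 0).2 rfl

lemma vone (hval_mul : ∀ a b : k, val (a * b) = val a + val b)
    (hval_top : ∀ a : k, val a = ⊤ ↔ a = 0) : val 1 = 0 := by
  have h := hval_mul 1 1
  rw [mul_one] at h
  have hne : val (1:k) ≠ ⊤ := by simp [hval_top]
  cases hx : val (1:k) with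
  | top => exact absurd hx hne
  | coe x =>
    rw [hx] at h
    rw [← WithTop.coe_add] at h
    have : x = x + x := WithTop.coe_injective h
    have : x = 0 := by linarith
    simp [this]

lemma vneg (hval_mul : ∀ a b : k, val (a * b) = val a + val b)
    (hval_top : ∀ a : k, val a = ⊤ ↔ a = 0) (a : k) : val (-a) = val a := by
  have hm : val ((-1 : k) * (-1)) = val (-1) + val (-1) := hval_mul _ _
  rw [neg_mul_neg, one_mul, vone val hval_mul hval_top] at hm
  have h1 : val (-1 : k) = 0 := by
    cases hx : val (-1 : k) with
    | top => rw [hx] at hm; simp at hm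
    | coe x =>
      rw [hx, ← WithTop.coe_add] at hm
      have : x + x = 0 := WithTop.coe_injective hm.symm
      have : x = 0 := by linarith
      simp [this]
  have : val (-a) = val ((-1 : k) * a) := by ring_nf
  rw [this, hval_mul, h1, zero_add]

lemma vadd_eq (hval_mul : ∀ a b : k, val (a * b) = val a + val b)
    (hval_add : ∀ a b : k, min (val a) (val b) ≤ val (a + b))
    (hval_top : ∀ a : k, val a = ⊤ ↔ a = 0)
    {a b : k} (h : val a < val b) : val (a + b) = val a := by
  have hle : val a ≤ val (a + b) := by
    have := hval_add a b
    rwa [min_eq_left h.le] at this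
  have hge : val (a + b) ≤ val a := by
    have h2 := hval_add (a + b) (-b)
    rw [add_neg_cancel_right, vneg val hval_mul hval_top] at h2
    rcases le_total (val (a + b)) (val b) with hc | hc
    · rwa [min_eq_left hc] at h2
    · rw [min_eq_right hc] at h2; exact absurd h2 (not_le.2 h)
  exact le_antisymm hge hle

lemma vsum (hval_add : ∀ a b : k, min (val a) (val b) ≤ val (a + b))
    (hval_top : ∀ a : k, val a = ⊤ ↔ a = 0)
    {ι : Type*} (S : Finset ι) (x : ι → k) (t : WithTop ℝ)
    (h : ∀ i ∈ S, t ≤ val (x i)) : t ≤ val (∑ i ∈ S, x i) := by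
  classical
  induction S using Finset.induction with
  | empty => simp [vzero val hval_top]
  | insert _ _ ha ih =>
    rw [Finset.sum_insert ha]
    refine le_trans (le_min (h _ (Finset.mem_insert_self _ _)) ?_) (hval_add _ _)
    exact ih fun i hi => h i (Finset.mem_insert_of_mem hi)

lemma vinv (hval_mul : ∀ a b : k, val (a * b) = val a + val b)
    (hval_top : ∀ a : k, val a = ⊤ ↔ a = 0)
    {b : k} {β : ℝ} (hb : val b = (β : WithTop ℝ)) : val b⁻¹ = ((-β : ℝ) : WithTop ℝ) := by
  have hbne : b ≠ 0 := by
    intro h0; rw [h0, (hval_top 0).2 rfl] at hb; exact (WithTop.coe_ne_top hb.symm).elim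
  have h := hval_mul b b⁻¹
  rw [mul_inv_cancel₀ hbne, vone val hval_mul hval_top, hb] at h
  cases hx : val b⁻¹ with
  | top => rw [hx] at h; simp at h
  | coe x =>
    rw [hx, ← WithTop.coe_add] at h
    have : (0:ℝ) = β + x := WithTop.coe_injective h
    have : x = -β := by linarith
    simp [this]

lemma vmul_le (hval_mul : ∀ a b : k, val (a * b) = val a + val b)
    {a b : k} {x y : ℝ} (ha : (x : WithTop ℝ) ≤ val a) (hb : (y : WithTop ℝ) ≤ val b) :
    ((x + y : ℝ) : WithTop ℝ) ≤ val (a * b) := by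
  rw [hval_mul, WithTop.coe_add]
  exact add_le_add ha hb

end Helpers

lemma exists_eps (S : Finset ℤ) (F : ℤ → WithTop ℝ) (L : ℤ → ℝ)
    (h : ∀ n ∈ S, ((L n : ℝ) : WithTop ℝ) < F n) :
    ∃ ε : ℝ, 0 < ε ∧ ∀ n ∈ S, (((L n + ε : ℝ)) : WithTop ℝ) ≤ F n := by
  classical
  induction S using Finset.induction with
  | empty => exact ⟨1, one_pos, by simp⟩
  | @insert a S ha ih =>
    obtain ⟨ε, hε, hb⟩ := ih fun n hn => h n (Finset.mem_insert_of_mem hn)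
    have haa := h a (Finset.mem_insert_self _ _)
    cases hFa : F a with
    | top =>
      refine ⟨ε, hε, fun n hn => ?_⟩
      rcases Finset.mem_insert.1 hn with rfl | hn
      · rw [hFa]; exact le_top
      · exact hb n hn
    | coe x =>
      rw [hFa, WithTop.coe_lt_coe] at haa
      refine ⟨min ε (x - L a), lt_min hε (by linarith), fun n hn => ?_⟩
      rcases Finset.mem_insert.1 hn with rfl | hn
      · rw [hFa, WithTop.coe_le_coe]
        have : min ε (x - L n) ≤ x - L n := min_le_right _ _
        linarith
      · refine le_trans ?_ (hb n hn)
        rw [WithTop.coe_le_coe]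
        have : min ε (x - L a) ≤ ε := min_le_left _ _
        linarith

noncomputable section Conv
variable {k : Type*} [Field k]

def conv (h c : ℤ →₀ k) : ℤ →₀ k := h.sum fun s a => a • c.mapDomain (· + s)

lemma conv_apply (h c : ℤ →₀ k) (n : ℤ) :
    conv h c n = h.sum fun s a => a * c (n - s) := by
  classical
  rw [conv, Finsupp.sum_apply]
  refine Finsupp.sum_congr fun s _ => ?_
  rw [Finsupp.smul_apply, smul_eq_mul]
  congr 1
  have h2 := Finsupp.mapDomain_apply (f := fun x => x + s) (add_left_injective s) c (n - s)
  simpa using h2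

lemma conv_add (h₁ h₂ c : ℤ →₀ k) : conv (h₁ + h₂) c = conv h₁ c + conv h₂ c := by
  classical
  exact Finsupp.sum_add_index' (fun s => by simp) (fun s a b => add_smul _ _ _)

lemma conv_zero (c : ℤ →₀ k) : conv 0 c = 0 := by
  classical
  simp [conv]

lemma conv_single (t : ℤ) (a : k) (c : ℤ →₀ k) (n : ℤ) :
    conv (Finsupp.single t a) c n = a * c (n - t) := by
  classical
  rw [conv_apply]
  exact Finsupp.sum_single_index (by simp)

end Conv

section Bound
variable {k : Type*} [Field k] (val : k → WithTop ℝ)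

lemma conv_val_bound
    (hval_mul : ∀ a b : k, val (a * b) = val a + val b)
    (hval_add : ∀ a b : k, min (val a) (val b) ≤ val (a + b))
    (hval_top : ∀ a : k, val a = ⊤ ↔ a = 0)
    (α β μ ε : ℝ) (hε : 0 ≤ ε) (c h : ℤ →₀ k)
    (hc0 : val (c 0) = (α : WithTop ℝ)) (hc1 : val (c 1) = (β : WithTop ℝ))
    (hcb : ∀ m : ℤ, m ≠ 0 → m ≠ 1 →
      ((α + (m:ℝ)*(β-α) + ε : ℝ) : WithTop ℝ) ≤ val (c m))
    (hh : ∀ s : ℤ, (((s:ℝ)*(β-α) + μ : ℝ) : WithTop ℝ) ≤ val (h s))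
    (n : ℤ) : ((α + (n:ℝ)*(β-α) + μ : ℝ) : WithTop ℝ) ≤ val (conv h c n) := by
  rw [conv_apply]
  apply vsum val hval_add hval_top
  intro s _
  rcases eq_or_ne (n - s) 0 with h0 | h0
  · have hcs : val (c (n - s)) = (α : WithTop ℝ) := by rw [h0, hc0]
    have hb := vmul_le val hval_mul (hh s) (le_of_eq hcs.symm)
    refine le_trans ?_ hb
    rw [WithTop.coe_le_coe]
    have hsn : (s:ℝ) = (n:ℝ) := by exact_mod_cast congrArg (Int.cast : ℤ → ℝ) (by omega : s = n)
    rw [hsn]; nlinarith [sq_nonneg (β-α)]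
  · rcases eq_or_ne (n - s) 1 with h1 | h1
    · have hcs : val (c (n - s)) = (β : WithTop ℝ) := by rw [h1, hc1]
      have hb := vmul_le val hval_mul (hh s) (le_of_eq hcs.symm)
      refine le_trans ?_ hb
      rw [WithTop.coe_le_coe]
      have hsn : (s:ℝ) = (n:ℝ) - 1 := by
        have : s = n - 1 := by omega
        rw [this]; push_cast; ring
      rw [hsn]; nlinarith [sq_nonneg (β-α)]
    · have hb := vmul_le val hval_mul (hh s) (hcb (n - s) h0 h1)
      refine le_trans ?_ hb
      rw [WithTop.coe_le_coe]
      have hsn : ((n - s : ℤ):ℝ) = (n:ℝ) - (s:ℝ) := by push_cast; ring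
      rw [hsn]
      nlinarith [hε]

end Bound

section Sweep
variable {k : Type*} [Field k] (val : k → WithTop ℝ)

lemma upper
    (hval_mul : ∀ a b : k, val (a * b) = val a + val b)
    (hval_add : ∀ a b : k, min (val a) (val b) ≤ val (a + b))
    (hval_top : ∀ a : k, val a = ⊤ ↔ a = 0)
    (α β μ ε : ℝ) (hμ : 0 < μ) (hε : 0 < ε)
    (c : ℤ →₀ k)
    (hc0 : val (c 0) = (α : WithTop ℝ)) (hc1 : val (c 1) = (β : WithTop ℝ))
    (hcb : ∀ m : ℤ, m ≠ 0 → m ≠ 1 →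
      ((α + (m:ℝ)*(β-α) + ε : ℝ) : WithTop ℝ) ≤ val (c m)) :
    ∀ (j : ℕ) (M : ℤ), M ≤ 1 + j → ∀ r : ℤ →₀ k,
    val (r 0) = (α : WithTop ℝ) → val (r 1) = (β : WithTop ℝ) →
    (∀ n : ℤ, n ≠ 0 → n ≠ 1 → ((α + (n:ℝ)*(β-α) + μ : ℝ) : WithTop ℝ) ≤ val (r n)) →
    (∀ n : ℤ, M < n → ((α + (n:ℝ)*(β-α) + μ + ε : ℝ) : WithTop ℝ) ≤ val (r n)) →
    ∃ h : ℤ →₀ k, (∀ s : ℤ, (((s:ℝ)*(β-α) + μ : ℝ) : WithTop ℝ) ≤ val (h s)) ∧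
      val ((r + conv h c) 0) = (α : WithTop ℝ) ∧
      val ((r + conv h c) 1) = (β : WithTop ℝ) ∧
      (∀ n : ℤ, n ≠ 0 → n ≠ 1 →
        ((α + (n:ℝ)*(β-α) + μ : ℝ) : WithTop ℝ) ≤ val ((r + conv h c) n)) ∧
      (∀ n : ℤ, 2 ≤ n →
        ((α + (n:ℝ)*(β-α) + μ + ε : ℝ) : WithTop ℝ) ≤ val ((r + conv h c) n)) := by
  intro j
  induction j with
  | zero =>
    intro M hM r h0 h1 hinv hgood
    refine ⟨0, fun s => by simp [vzero val hval_top], ?_, ?_, ?_, ?_⟩ <;>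
      rw [conv_zero, add_zero]
    exacts [h0, h1, hinv, fun n hn => hgood n (by omega)]
  | succ j ih =>
    intro M hM r h0 h1 hinv hgood
    by_cases hM1 : M ≤ 1
    · refine ⟨0, fun s => by simp [vzero val hval_top], ?_, ?_, ?_, ?_⟩ <;>
        rw [conv_zero, add_zero]
      exacts [h0, h1, hinv, fun n hn => hgood n (by omega)]
    · -- M ≥ 2 : kill position M using pivot c 1
      have hM2 : 2 ≤ M := by omega
      have hc1ne : c 1 ≠ 0 := by
        intro hz; rw [hz, (hval_top 0).2 rfl] at hc1; exact WithTop.coe_ne_top hc1.symm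
      set a : k := -(r M) * (c 1)⁻¹ with ha_def
      set h₁ : ℤ →₀ k := Finsupp.single (M-1) a with hh₁_def
      have hvinv : val (c 1)⁻¹ = ((-β : ℝ) : WithTop ℝ) := vinv val hval_mul hval_top hc1
      have hva : ((α + (M:ℝ)*(β-α) + μ - β : ℝ) : WithTop ℝ) ≤ val a := by
        have hrM := hinv M (by omega) (by omega)
        calc ((α + (M:ℝ)*(β-α) + μ - β : ℝ) : WithTop ℝ)
            = ((α + (M:ℝ)*(β-α) + μ : ℝ) : WithTop ℝ) + ((-β : ℝ) : WithTop ℝ) := by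
              rw [← WithTop.coe_add, WithTop.coe_inj]; ring
          _ ≤ val (r M) + ((-β : ℝ) : WithTop ℝ) := add_le_add hrM le_rfl
          _ = val a := by
              rw [ha_def, hval_mul, vneg val hval_mul hval_top, hvinv]
      have hh₁ : ∀ s : ℤ, (((s:ℝ)*(β-α) + μ : ℝ) : WithTop ℝ) ≤ val (h₁ s) := by
        intro s
        rcases eq_or_ne s (M-1) with rfl | hs
        · rw [hh₁_def, Finsupp.single_eq_same]
          refine le_trans (le_of_eq ?_) hva
          rw [WithTop.coe_inj]; push_cast; ring
        · rw [hh₁_def, Finsupp.single_eq_of_ne' (Ne.symm hs), vzero val hval_top]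
          exact le_top
      have hconvb : ∀ p : ℤ, ((α + (p:ℝ)*(β-α) + μ : ℝ) : WithTop ℝ) ≤ val (conv h₁ c p) :=
        conv_val_bound val hval_mul hval_add hval_top α β μ ε hε.le c h₁ hc0 hc1 hcb hh₁
      set r' : ℤ →₀ k := r + conv h₁ c with hr'_def
      have hr'app : ∀ p : ℤ, r' p = r p + a * c (p - (M-1)) := by
        intro p; rw [hr'_def, Finsupp.add_apply, conv_single]
      have h0' : val (r' 0) = (α : WithTop ℝ) := by
        rw [hr'_def, Finsupp.add_apply, vadd_eq val hval_mul hval_add hval_top, h0]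
        rw [h0]
        refine lt_of_lt_of_le ?_ (hconvb 0)
        rw [WithTop.coe_lt_coe]; push_cast; linarith
      have h1' : val (r' 1) = (β : WithTop ℝ) := by
        rw [hr'_def, Finsupp.add_apply, vadd_eq val hval_mul hval_add hval_top, h1]
        rw [h1]
        refine lt_of_lt_of_le ?_ (hconvb 1)
        rw [WithTop.coe_lt_coe]; push_cast; linarith
      have hinv' : ∀ n : ℤ, n ≠ 0 → n ≠ 1 →
          ((α + (n:ℝ)*(β-α) + μ : ℝ) : WithTop ℝ) ≤ val (r' n) := by
        intro n hn0 hn1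
        rw [hr'_def, Finsupp.add_apply]
        exact le_trans (le_min (hinv n hn0 hn1) (hconvb n)) (hval_add _ _)
      have hr'M : r' M = 0 := by
        rw [hr'app]
        have : M - (M - 1) = 1 := by ring
        rw [this, ha_def]
        field_simp
        ring
      have hgood' : ∀ n : ℤ, M - 1 < n →
          ((α + (n:ℝ)*(β-α) + μ + ε : ℝ) : WithTop ℝ) ≤ val (r' n) := by
        intro n hn
        rcases eq_or_ne n M with rfl | hnM
        · rw [hr'M, vzero val hval_top]; exact le_top
        · have hnM' : M < n := by omega
          rw [hr'app]
          refine le_trans (le_min (hgood n hnM') ?_) (hval_add _ _)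
          have hq0 : n - (M-1) ≠ 0 := by omega
          have hq1 : n - (M-1) ≠ 1 := by omega
          have hb := vmul_le val hval_mul hva (hcb _ hq0 hq1)
          refine le_trans (le_of_eq ?_) hb
          rw [WithTop.coe_inj]; push_cast; ring
      obtain ⟨h₂, hh₂, H0, H1, Hinv, Hgood⟩ :=
        ih (M-1) (by omega) r' h0' h1' hinv' hgood'
      refine ⟨h₁ + h₂, ?_, ?_, ?_, ?_, ?_⟩
      · intro s
        rw [Finsupp.add_apply]
        exact le_trans (le_min (hh₁ s) (hh₂ s)) (hval_add _ _)
      all_goals rw [conv_add, ← add_assoc, ← hr'_def]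
      exacts [H0, H1, Hinv, Hgood]

end Sweep

section Lower
variable {k : Type*} [Field k] (val : k → WithTop ℝ)

lemma lower
    (hval_mul : ∀ a b : k, val (a * b) = val a + val b)
    (hval_add : ∀ a b : k, min (val a) (val b) ≤ val (a + b))
    (hval_top : ∀ a : k, val a = ⊤ ↔ a = 0)
    (α β μ ε : ℝ) (hμ : 0 < μ) (hε : 0 < ε)
    (c : ℤ →₀ k)
    (hc0 : val (c 0) = (α : WithTop ℝ)) (hc1 : val (c 1) = (β : WithTop ℝ))
    (hcb : ∀ m : ℤ, m ≠ 0 → m ≠ 1 →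
      ((α + (m:ℝ)*(β-α) + ε : ℝ) : WithTop ℝ) ≤ val (c m)) :
    ∀ (j : ℕ) (M : ℤ), -(j:ℤ) ≤ M → ∀ r : ℤ →₀ k,
    val (r 0) = (α : WithTop ℝ) → val (r 1) = (β : WithTop ℝ) →
    (∀ n : ℤ, n ≠ 0 → n ≠ 1 → ((α + (n:ℝ)*(β-α) + μ : ℝ) : WithTop ℝ) ≤ val (r n)) →
    (∀ n : ℤ, 2 ≤ n → ((α + (n:ℝ)*(β-α) + μ + ε : ℝ) : WithTop ℝ) ≤ val (r n)) →
    (∀ n : ℤ, n < M → ((α + (n:ℝ)*(β-α) + μ + ε : ℝ) : WithTop ℝ) ≤ val (r n)) →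
    ∃ h : ℤ →₀ k, (∀ s : ℤ, (((s:ℝ)*(β-α) + μ : ℝ) : WithTop ℝ) ≤ val (h s)) ∧
      val ((r + conv h c) 0) = (α : WithTop ℝ) ∧
      val ((r + conv h c) 1) = (β : WithTop ℝ) ∧
      (∀ n : ℤ, n ≠ 0 → n ≠ 1 →
        ((α + (n:ℝ)*(β-α) + μ + ε : ℝ) : WithTop ℝ) ≤ val ((r + conv h c) n)) := by
  intro j
  induction j with
  | zero =>
    intro M hM r h0 h1 hinv hup hdown
    refine ⟨0, fun s => by simp [vzero val hval_top], ?_, ?_, ?_⟩ <;>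
      rw [conv_zero, add_zero]
    · exact h0
    · exact h1
    · intro n hn0 hn1
      rcases le_or_gt 2 n with h2 | h2
      · exact hup n h2
      · exact hdown n (by omega)
  | succ j ih =>
    intro M hM r h0 h1 hinv hup hdown
    by_cases hM0 : 0 ≤ M
    · refine ⟨0, fun s => by simp [vzero val hval_top], ?_, ?_, ?_⟩ <;>
        rw [conv_zero, add_zero]
      · exact h0
      · exact h1
      · intro n hn0 hn1
        rcases le_or_gt 2 n with h2 | h2
        · exact hup n h2
        · exact hdown n (by omega)
    · -- M ≤ -1 : kill position M using pivot c 0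
      have hM1 : M ≤ -1 := by omega
      have hc0ne : c 0 ≠ 0 := by
        intro hz; rw [hz, (hval_top 0).2 rfl] at hc0; exact WithTop.coe_ne_top hc0.symm
      set a : k := -(r M) * (c 0)⁻¹ with ha_def
      set h₁ : ℤ →₀ k := Finsupp.single M a with hh₁_def
      have hvinv : val (c 0)⁻¹ = ((-α : ℝ) : WithTop ℝ) := vinv val hval_mul hval_top hc0
      have hva : ((α + (M:ℝ)*(β-α) + μ - α : ℝ) : WithTop ℝ) ≤ val a := by
        have hrM := hinv M (by omega) (by omega)
        calc ((α + (M:ℝ)*(β-α) + μ - α : ℝ) : WithTop ℝ)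
            = ((α + (M:ℝ)*(β-α) + μ : ℝ) : WithTop ℝ) + ((-α : ℝ) : WithTop ℝ) := by
              rw [← WithTop.coe_add, WithTop.coe_inj]; ring
          _ ≤ val (r M) + ((-α : ℝ) : WithTop ℝ) := add_le_add hrM le_rfl
          _ = val a := by
              rw [ha_def, hval_mul, vneg val hval_mul hval_top, hvinv]
      have hh₁ : ∀ s : ℤ, (((s:ℝ)*(β-α) + μ : ℝ) : WithTop ℝ) ≤ val (h₁ s) := by
        intro s
        rcases eq_or_ne s M with rfl | hs
        · rw [hh₁_def, Finsupp.single_eq_same]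
          refine le_trans (le_of_eq ?_) hva
          rw [WithTop.coe_inj]; push_cast; ring
        · rw [hh₁_def, Finsupp.single_eq_of_ne' (Ne.symm hs), vzero val hval_top]
          exact le_top
      have hconvb : ∀ p : ℤ, ((α + (p:ℝ)*(β-α) + μ : ℝ) : WithTop ℝ) ≤ val (conv h₁ c p) :=
        conv_val_bound val hval_mul hval_add hval_top α β μ ε hε.le c h₁ hc0 hc1 hcb hh₁
      set r' : ℤ →₀ k := r + conv h₁ c with hr'_def
      have hr'app : ∀ p : ℤ, r' p = r p + a * c (p - M) := by
        intro p; rw [hr'_def, Finsupp.add_apply, conv_single]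
      have h0' : val (r' 0) = (α : WithTop ℝ) := by
        rw [hr'_def, Finsupp.add_apply, vadd_eq val hval_mul hval_add hval_top, h0]
        rw [h0]
        refine lt_of_lt_of_le ?_ (hconvb 0)
        rw [WithTop.coe_lt_coe]; push_cast; linarith
      have h1' : val (r' 1) = (β : WithTop ℝ) := by
        rw [hr'_def, Finsupp.add_apply, vadd_eq val hval_mul hval_add hval_top, h1]
        rw [h1]
        refine lt_of_lt_of_le ?_ (hconvb 1)
        rw [WithTop.coe_lt_coe]; push_cast; linarith
      have hinv' : ∀ n : ℤ, n ≠ 0 → n ≠ 1 →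
          ((α + (n:ℝ)*(β-α) + μ : ℝ) : WithTop ℝ) ≤ val (r' n) := by
        intro n hn0 hn1
        rw [hr'_def, Finsupp.add_apply]
        exact le_trans (le_min (hinv n hn0 hn1) (hconvb n)) (hval_add _ _)
      have hr'M : r' M = 0 := by
        rw [hr'app]
        have : M - M = 0 := by ring
        rw [this, ha_def]
        field_simp
        ring
      have hgoodterm : ∀ n : ℤ, n - M ≠ 0 → n - M ≠ 1 →
          ((α + (n:ℝ)*(β-α) + μ + ε : ℝ) : WithTop ℝ) ≤ val (a * c (n - M)) := by
        intro n hq0 hq1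
        have hb := vmul_le val hval_mul hva (hcb _ hq0 hq1)
        refine le_trans (le_of_eq ?_) hb
        rw [WithTop.coe_inj]; push_cast; ring
      have hup' : ∀ n : ℤ, 2 ≤ n →
          ((α + (n:ℝ)*(β-α) + μ + ε : ℝ) : WithTop ℝ) ≤ val (r' n) := by
        intro n hn
        rw [hr'app]
        refine le_trans (le_min (hup n hn) (hgoodterm n (by omega) (by omega))) (hval_add _ _)
      have hdown' : ∀ n : ℤ, n < M + 1 →
          ((α + (n:ℝ)*(β-α) + μ + ε : ℝ) : WithTop ℝ) ≤ val (r' n) := by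
        intro n hn
        rcases eq_or_ne n M with rfl | hnM
        · rw [hr'M, vzero val hval_top]; exact le_top
        · have hnM' : n < M := by omega
          rw [hr'app]
          refine le_trans (le_min (hdown n hnM') (hgoodterm n (by omega) (by omega)))
            (hval_add _ _)
      obtain ⟨h₂, hh₂, H0, H1, Hinv⟩ :=
        ih (M+1) (by omega) r' h0' h1' hinv' hup' hdown'
      refine ⟨h₁ + h₂, ?_, ?_, ?_, ?_⟩
      · intro s
        rw [Finsupp.add_apply]
        exact le_trans (le_min (hh₁ s) (hh₂ s)) (hval_add _ _)
      all_goals rw [conv_add, ← add_assoc, ← hr'_def]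
      exacts [H0, H1, Hinv]

end Lower

section Iterate
variable {k : Type*} [Field k] (val : k → WithTop ℝ)

lemma sweep
    (hval_mul : ∀ a b : k, val (a * b) = val a + val b)
    (hval_add : ∀ a b : k, min (val a) (val b) ≤ val (a + b))
    (hval_top : ∀ a : k, val a = ⊤ ↔ a = 0)
    (α β μ ε : ℝ) (hμ : 0 < μ) (hε : 0 < ε)
    (c : ℤ →₀ k)
    (hc0 : val (c 0) = (α : WithTop ℝ)) (hc1 : val (c 1) = (β : WithTop ℝ))
    (hcb : ∀ m : ℤ, m ≠ 0 → m ≠ 1 →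
      ((α + (m:ℝ)*(β-α) + ε : ℝ) : WithTop ℝ) ≤ val (c m))
    (r : ℤ →₀ k)
    (h0 : val (r 0) = (α : WithTop ℝ)) (h1 : val (r 1) = (β : WithTop ℝ))
    (hinv : ∀ n : ℤ, n ≠ 0 → n ≠ 1 →
      ((α + (n:ℝ)*(β-α) + μ : ℝ) : WithTop ℝ) ≤ val (r n)) :
    ∃ h : ℤ →₀ k, (∀ s : ℤ, (((s:ℝ)*(β-α) + μ : ℝ) : WithTop ℝ) ≤ val (h s)) ∧
      val ((r + conv h c) 0) = (α : WithTop ℝ) ∧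
      val ((r + conv h c) 1) = (β : WithTop ℝ) ∧
      (∀ n : ℤ, n ≠ 0 → n ≠ 1 →
        ((α + (n:ℝ)*(β-α) + μ + ε : ℝ) : WithTop ℝ) ≤ val ((r + conv h c) n)) := by
  obtain ⟨M₀, hM₀⟩ := r.support.bddAbove
  have hup : ∀ n : ℤ, M₀ < n → ((α + (n:ℝ)*(β-α) + μ + ε : ℝ) : WithTop ℝ) ≤ val (r n) := by
    intro n hn
    have : r n = 0 := by
      by_contra hne
      exact absurd (hM₀ (Finsupp.mem_support_iff.2 hne)) (by omega)
    rw [this, vzero val hval_top]; exact le_top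
  obtain ⟨h₁, hh₁, H0, H1, Hinv, Hgood⟩ :=
    upper val hval_mul hval_add hval_top α β μ ε hμ hε c hc0 hc1 hcb
      (M₀ - 1).toNat M₀ (by omega) r h0 h1 hinv hup
  set r₁ : ℤ →₀ k := r + conv h₁ c with hr₁_def
  obtain ⟨M₁, hM₁⟩ := r₁.support.bddBelow
  have hdown : ∀ n : ℤ, n < M₁ →
      ((α + (n:ℝ)*(β-α) + μ + ε : ℝ) : WithTop ℝ) ≤ val (r₁ n) := by
    intro n hn
    have : r₁ n = 0 := by
      by_contra hne
      exact absurd (hM₁ (Finsupp.mem_support_iff.2 hne)) (by omega)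
    rw [this, vzero val hval_top]; exact le_top
  obtain ⟨h₂, hh₂, G0, G1, Ginv⟩ :=
    lower val hval_mul hval_add hval_top α β μ ε hμ hε c hc0 hc1 hcb
      (-M₁).toNat M₁ (by omega) r₁ H0 H1 Hinv Hgood hdown
  refine ⟨h₁ + h₂, ?_, ?_, ?_, ?_⟩
  · intro s
    rw [Finsupp.add_apply]
    exact le_trans (le_min (hh₁ s) (hh₂ s)) (hval_add _ _)
  all_goals rw [conv_add, ← add_assoc, ← hr₁_def]
  exacts [G0, G1, Ginv]

lemma iterK
    (hval_mul : ∀ a b : k, val (a * b) = val a + val b)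
    (hval_add : ∀ a b : k, min (val a) (val b) ≤ val (a + b))
    (hval_top : ∀ a : k, val a = ⊤ ↔ a = 0)
    (α β ε : ℝ) (hε : 0 < ε)
    (c : ℤ →₀ k)
    (hc0 : val (c 0) = (α : WithTop ℝ)) (hc1 : val (c 1) = (β : WithTop ℝ))
    (hcb : ∀ m : ℤ, m ≠ 0 → m ≠ 1 →
      ((α + (m:ℝ)*(β-α) + ε : ℝ) : WithTop ℝ) ≤ val (c m)) :
    ∀ (K : ℕ) (μ : ℝ), 0 < μ → ∀ r : ℤ →₀ k,
    val (r 0) = (α : WithTop ℝ) → val (r 1) = (β : WithTop ℝ) →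
    (∀ n : ℤ, n ≠ 0 → n ≠ 1 →
      ((α + (n:ℝ)*(β-α) + μ : ℝ) : WithTop ℝ) ≤ val (r n)) →
    ∃ h : ℤ →₀ k, (∀ s : ℤ, (((s:ℝ)*(β-α) + μ : ℝ) : WithTop ℝ) ≤ val (h s)) ∧
      val ((r + conv h c) 0) = (α : WithTop ℝ) ∧
      val ((r + conv h c) 1) = (β : WithTop ℝ) ∧
      (∀ n : ℤ, n ≠ 0 → n ≠ 1 →
        ((α + (n:ℝ)*(β-α) + μ + (K:ℝ)*ε : ℝ) : WithTop ℝ) ≤ val ((r + conv h c) n)) := by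
  intro K
  induction K with
  | zero =>
    intro μ hμ r h0 h1 hinv
    refine ⟨0, fun s => by simp [vzero val hval_top], ?_, ?_, ?_⟩ <;>
      rw [conv_zero, add_zero]
    · exact h0
    · exact h1
    · intro n hn0 hn1
      refine le_trans (le_of_eq ?_) (hinv n hn0 hn1)
      rw [WithTop.coe_inj]; push_cast; ring
  | succ K ih =>
    intro μ hμ r h0 h1 hinv
    obtain ⟨h₁, hh₁, H0, H1, Hinv⟩ :=
      sweep val hval_mul hval_add hval_top α β μ ε hμ hε c hc0 hc1 hcb r h0 h1 hinv
    set r₁ : ℤ →₀ k := r + conv h₁ c with hr₁_def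
    obtain ⟨h₂, hh₂, G0, G1, Ginv⟩ :=
      ih (μ + ε) (by linarith) r₁ H0 H1 (fun n hn0 hn1 => by
        refine le_trans (le_of_eq ?_) (Hinv n hn0 hn1)
        rw [WithTop.coe_inj]; ring)
    refine ⟨h₁ + h₂, ?_, ?_, ?_, ?_⟩
    · intro s
      rw [Finsupp.add_apply]
      refine le_trans (le_min (hh₁ s) (le_trans ?_ (hh₂ s))) (hval_add _ _)
      rw [WithTop.coe_le_coe]; linarith
    all_goals rw [conv_add, ← add_assoc, ← hr₁_def]
    · exact G0
    · exact G1
    · intro n hn0 hn1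
      refine le_trans (le_of_eq ?_) (Ginv n hn0 hn1)
      rw [WithTop.coe_inj]; push_cast; ring

end Iterate

section Key
variable {k : Type*} [Field k] (val : k → WithTop ℝ)

lemma key
    (hval_mul : ∀ a b : k, val (a * b) = val a + val b)
    (hval_add : ∀ a b : k, min (val a) (val b) ≤ val (a + b))
    (hval_top : ∀ a : k, val a = ⊤ ↔ a = 0)
    (lam : ℝ) (hlam : 0 ≤ lam) (α β : ℝ) (c d : ℤ →₀ k)
    (hc0 : val (c 0) = (α : WithTop ℝ)) (hc1 : val (c 1) = (β : WithTop ℝ))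
    (hd0 : val (d 0) = (α : WithTop ℝ)) (hd1 : val (d 1) = (β : WithTop ℝ))
    (hcb : ∀ n : ℤ, n ≠ 0 → n ≠ 1 →
      ((α + (n:ℝ)*(β-α) : ℝ) : WithTop ℝ) < val (c n))
    (hdb : ∀ n : ℤ, n ≠ 0 → n ≠ 1 →
      ((α + (n:ℝ)*(β-α) : ℝ) : WithTop ℝ) < val (d n)) :
    ∃ h : ℤ →₀ k,
      (∀ s : ℤ, (((s:ℝ)*(β-α) : ℝ) : WithTop ℝ) < val (h s)) ∧
      val (d 0 + h.sum fun s a => a * c (0 - s)) = (α : WithTop ℝ) ∧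
      val (d 1 + h.sum fun s a => a * c (1 - s)) = (β : WithTop ℝ) ∧
      ∀ n : ℤ, n ≠ 0 → n ≠ 1 →
        ((α + (n:ℝ)*(β-α) + lam : ℝ) : WithTop ℝ) <
          val (d n + h.sum fun s a => a * c (n - s)) := by
  classical
  obtain ⟨ε, hε, hεb⟩ := exists_eps (c.support \ {0, 1}) (fun n => val (c n))
    (fun n => α + (n:ℝ)*(β-α)) (by
      intro n hn
      rw [Finset.mem_sdiff, Finset.mem_insert, Finset.mem_singleton] at hn
      exact hcb n (fun h => hn.2 (Or.inl h)) (fun h => hn.2 (Or.inr h)))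
  have hcb' : ∀ m : ℤ, m ≠ 0 → m ≠ 1 →
      ((α + (m:ℝ)*(β-α) + ε : ℝ) : WithTop ℝ) ≤ val (c m) := by
    intro m h0 h1
    by_cases hm : m ∈ c.support
    · exact hεb m (Finset.mem_sdiff.2 ⟨hm, by simp [h0, h1]⟩)
    · rw [Finsupp.notMem_support_iff.1 hm, vzero val hval_top]; exact le_top
  obtain ⟨μ₀, hμ₀, hμb⟩ := exists_eps (d.support \ {0, 1}) (fun n => val (d n))
    (fun n => α + (n:ℝ)*(β-α)) (by
      intro n hn
      rw [Finset.mem_sdiff, Finset.mem_insert, Finset.mem_singleton] at hn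
      exact hdb n (fun h => hn.2 (Or.inl h)) (fun h => hn.2 (Or.inr h)))
  have hdb' : ∀ n : ℤ, n ≠ 0 → n ≠ 1 →
      ((α + (n:ℝ)*(β-α) + μ₀ : ℝ) : WithTop ℝ) ≤ val (d n) := by
    intro n h0 h1
    by_cases hn : n ∈ d.support
    · exact hμb n (Finset.mem_sdiff.2 ⟨hn, by simp [h0, h1]⟩)
    · rw [Finsupp.notMem_support_iff.1 hn, vzero val hval_top]; exact le_top
  obtain ⟨K, hK⟩ := exists_nat_gt ((lam - μ₀) / ε)
  have hKε : lam < μ₀ + (K:ℝ) * ε := by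
    have := (div_lt_iff₀ hε).1 hK
    linarith
  obtain ⟨h, hh, H0, H1, Hinv⟩ :=
    iterK val hval_mul hval_add hval_top α β ε hε c hc0 hc1 hcb' K μ₀ hμ₀ d hd0 hd1 hdb'
  rw [Finsupp.add_apply, conv_apply] at H0 H1
  refine ⟨h, ?_, H0, H1, ?_⟩
  · intro s
    refine lt_of_lt_of_le ?_ (hh s)
    rw [WithTop.coe_lt_coe]; linarith
  · intro n hn0 hn1
    have := Hinv n hn0 hn1
    rw [Finsupp.add_apply, conv_apply] at this
    refine lt_of_lt_of_le ?_ this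
    rw [WithTop.coe_lt_coe]; linarith

end Key

theorem stmt1 {k : Type*} [Field k] (val : k → WithTop ℝ)
    (hval_mul : ∀ a b : k, val (a * b) = val a + val b)
    (hval_add : ∀ a b : k, min (val a) (val b) ≤ val (a + b))
    (hval_top : ∀ a : k, val a = ⊤ ↔ a = 0)
    (lam : ℝ) (hlam : 0 ≤ lam)
    (i₀ i₁ : ℤ × ℤ) (v : ℤ × ℤ) (hv : v = i₁ - i₀)
    (hprim : IsCoprime v.1 v.2)
    (f g : (ℤ × ℤ) →₀ k)
    (hc0 : f i₀ ≠ 0) (hc1 : f i₁ ≠ 0) (hd0 : g i₀ ≠ 0) (hd1 : g i₁ ≠ 0)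
    (α β : ℝ)
    (hfα : val (f i₀) = (α : WithTop ℝ)) (hgα : val (g i₀) = (α : WithTop ℝ))
    (hfβ : val (f i₁) = (β : WithTop ℝ)) (hgβ : val (g i₁) = (β : WithTop ℝ))
    (hμf : ∀ n : ℤ, n ≠ 0 → n ≠ 1 →
      ((α + (n : ℝ) * (β - α) : ℝ) : WithTop ℝ) < val (f (i₀ + n • v)))
    (hμg : ∀ n : ℤ, n ≠ 0 → n ≠ 1 →
      ((α + (n : ℝ) * (β - α) : ℝ) : WithTop ℝ) < val (g (i₀ + n • v))) :
    ∃ h : ℤ →₀ k,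
      (∀ s : ℤ, (((s : ℝ) * (β - α) : ℝ) : WithTop ℝ) < val (h s)) ∧
      val (g i₀ + h.sum fun s a => a * f (i₀ - s • v)) = (α : WithTop ℝ) ∧
      val (g i₁ + h.sum fun s a => a * f (i₁ - s • v)) = (β : WithTop ℝ) ∧
      ∀ n : ℤ, n ≠ 0 → n ≠ 1 →
        ((α + (n : ℝ) * (β - α) + lam : ℝ) : WithTop ℝ) <
          val (g (i₀ + n • v) + h.sum fun s a => a * f (i₀ + n • v - s • v)) := by
  classical
  have hvne : v ≠ 0 := by
    intro hz
    rw [hz] at hprim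
    exact not_isUnit_zero (isCoprime_zero_left.1 (by simpa using hprim))
  have hinj : Function.Injective (fun n : ℤ => i₀ + n • v) := by
    intro m n hmn
    simp only [add_right_inj] at hmn
    have h1 : (m - n) • v = 0 := by rw [sub_smul, hmn, sub_self]
    have h2 : (m - n) * v.1 = 0 ∧ (m - n) * v.2 = 0 := by
      constructor
      · have := congrArg Prod.fst h1; simpa [smul_eq_mul] using this
      · have := congrArg Prod.snd h1; simpa [smul_eq_mul] using this
    rcases mul_eq_zero.1 h2.1 with hm | hv1
    · omega
    · rcases mul_eq_zero.1 h2.2 with hm | hv2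
      · omega
      · exact absurd (Prod.ext hv1 hv2) hvne
  set e : ℤ → ℤ × ℤ := fun n => i₀ + n • v with he_def
  set c : ℤ →₀ k := f.comapDomain e hinj.injOn with hc_def
  set d : ℤ →₀ k := g.comapDomain e hinj.injOn with hd_def
  have hce : ∀ n : ℤ, c n = f (i₀ + n • v) := fun n => rfl
  have hde : ∀ n : ℤ, d n = g (i₀ + n • v) := fun n => rfl
  have he1 : i₀ + (1:ℤ) • v = i₁ := by rw [one_smul, hv]; abel
  have he0 : i₀ + (0:ℤ) • v = i₀ := by rw [zero_smul, add_zero]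
  obtain ⟨h, hh, H0, H1, Hinv⟩ :=
    key val hval_mul hval_add hval_top lam hlam α β c d
      (by rw [hce, he0, hfα]) (by rw [hce, he1, hfβ])
      (by rw [hde, he0, hgα]) (by rw [hde, he1, hgβ])
      (fun n h0 h1 => by rw [hce]; exact hμf n h0 h1)
      (fun n h0 h1 => by rw [hde]; exact hμg n h0 h1)
  have hsum0 : (h.sum fun s a => a * c (0 - s)) = h.sum fun s a => a * f (i₀ - s • v) := by
    refine Finsupp.sum_congr fun s _ => ?_
    rw [hce]
    congr 1
    rw [sub_smul, zero_smul]
    abel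
  have hsum1 : (h.sum fun s a => a * c (1 - s)) = h.sum fun s a => a * f (i₁ - s • v) := by
    refine Finsupp.sum_congr fun s _ => ?_
    rw [hce]
    congr 1
    rw [sub_smul, one_smul, hv]
    abel
  have hsumn : ∀ n : ℤ, (h.sum fun s a => a * c (n - s)) =
      h.sum fun s a => a * f (i₀ + n • v - s • v) := by
    intro n
    refine Finsupp.sum_congr fun s _ => ?_
    rw [hce]
    congr 1
    rw [sub_smul]
    abel
  rw [hde, he0, hsum0] at H0
  rw [hde, he1, hsum1] at H1
  refine ⟨h, hh, H0, H1, fun n h0 h1 => ?_⟩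
  have := Hinv n h0 h1
  rwa [hde, hsumn] at this
end

section
/- Let λ ≥ 0. Let f = Σ_n c_n x^n ∈ k[x^{±1}] be a univariate Laurent polynomial with c₀ = c₁ = 1 and val(c_n) > 0 for all n ∈ ℤ∖{0,1}, and let g = Σ_n d_n x^n ∈ k[x^{±1}] satisfy val(d₀) = val(d₁) = 0 and val(d_n) > 0 for all n ∈ ℤ∖{0,1}. Then there exists h ∈ k[x^{±1}] all of whose coefficients have strictly positive valuation such that the Laurent polynomial g′ := g + h·f satisfies val(g′₀) = val(g′₁) = 0 and val(g′_n) > λ for all n ∈ ℤ∖{0,1}. -/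
section ValLemmas
variable {k : Type*} [Field k] (val : k → WithTop ℝ)
    (hval_mul : ∀ a b : k, val (a * b) = val a + val b)
    (hval_add : ∀ a b : k, min (val a) (val b) ≤ val (a + b))
    (hval_top : ∀ a : k, val a = ⊤ ↔ a = 0)

include hval_mul hval_top in
lemma val_one' : val 1 = 0 := by
  have h := hval_mul 1 1
  rw [mul_one] at h
  have hne : val 1 ≠ ⊤ := by simp [hval_top]
  lift val 1 to ℝ using hne with a ha
  rw [← WithTop.coe_add, WithTop.coe_eq_coe] at h
  norm_num at h
  exact_mod_cast h

include hval_mul hval_top in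
lemma val_neg' (a : k) : val (-a) = val a := by
  have h1 : val (-1 : k) = 0 := by
    have h := hval_mul (-1) (-1)
    rw [neg_mul_neg, one_mul, val_one' val hval_mul hval_top] at h
    have hne : val (-1 : k) ≠ ⊤ := by simp [hval_top]
    lift val (-1 : k) to ℝ using hne with b hb
    rw [← WithTop.coe_add, eq_comm, WithTop.coe_eq_zero] at h
    norm_num at h
    exact_mod_cast h
  have := hval_mul (-1) a
  rw [neg_one_mul, h1, zero_add] at this
  exact this

include hval_top in
lemma val_zero' : val 0 = ⊤ := (hval_top 0).mpr rfl

include hval_add hval_top in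
lemma val_sum' {ι : Type*} (S : Finset ι) (F : ι → k) (c : WithTop ℝ)
    (h : ∀ i ∈ S, c ≤ val (F i)) : c ≤ val (∑ i ∈ S, F i) := by
  induction S using Finset.cons_induction with
  | empty => simp [val_zero' val hval_top]
  | cons a s hx ih =>
    rw [Finset.sum_cons]
    refine le_trans ?_ (hval_add _ _)
    exact le_min (h a (Finset.mem_cons_self a s))
      (ih fun i hi => h i (Finset.mem_cons_of_mem hi))

include hval_mul hval_add hval_top in
lemma val_dom' (a b : k) (h : val a < val b) : val (a + b) = val a := by
  refine le_antisymm ?_ (by simpa [min_eq_left h.le] using hval_add a b)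
  by_contra hc
  push_neg at hc
  have h2 : val a = val ((a + b) + (-b)) := by ring_nf
  have h3 := hval_add (a + b) (-b)
  rw [val_neg' val hval_mul hval_top, ← h2] at h3
  exact absurd (lt_of_lt_of_le (lt_min hc h) h3) (lt_irrefl _)

include hval_mul hval_top in
lemma val_neg_one_pow' (m : ℕ) (a : k) : val ((-1) ^ m * a) = val a := by
  rcases neg_one_pow_eq_or k m with h | h <;> rw [h] <;>
    simp [val_neg' val hval_mul hval_top]

end ValLemmas

section Defs
variable {k : Type*} [Field k]

noncomputable def Sneg (g : ℤ →₀ k) (n : ℤ) : k :=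
  ∑ m ∈ g.support, if m ≤ n then (-1) ^ (n - m).natAbs * g m else 0

noncomputable def Spos (g : ℤ →₀ k) (n : ℤ) : k :=
  ∑ m ∈ g.support, if n + 1 ≤ m then (-1) ^ (m - n - 1).natAbs * g m else 0

noncomputable def Afun (g : ℤ →₀ k) (n : ℤ) : k :=
  if n ≤ -1 then -Sneg g n else if 1 ≤ n then -Spos g n else 0

lemma Sneg_rec (g : ℤ →₀ k) (n : ℤ) : Sneg g n = g n - Sneg g (n - 1) := by
  unfold Sneg
  have key : ∀ m ∈ g.support,
      (if m ≤ n then (-1 : k) ^ (n - m).natAbs * g m else 0)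
      = (if m = n then g m else 0) - (if m ≤ n - 1 then (-1) ^ (n - 1 - m).natAbs * g m else 0) := by
    intro m _
    rcases eq_or_ne m n with rfl | hmn
    · simp
    · rcases le_or_gt m (n - 1) with hle | hlt
      · have h1 : ¬ (m = n) := hmn
        have h2 : m ≤ n := by omega
        have h3 : (n - m).natAbs = (n - 1 - m).natAbs + 1 := by omega
        rw [if_pos h2, if_neg h1, if_pos hle, h3, pow_succ]
        ring
      · have h2 : ¬ m ≤ n := by omega
        have h4 : ¬ m ≤ n - 1 := by omega
        simp [h2, hmn, h4]
  rw [Finset.sum_congr rfl key, Finset.sum_sub_distrib, Finset.sum_ite_eq' g.support n]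
  congr 1
  split
  · rfl
  · rw [Finsupp.notMem_support_iff.mp (by assumption)]

lemma Spos_rec (g : ℤ →₀ k) (n : ℤ) : Spos g (n - 1) = g n - Spos g n := by
  unfold Spos
  have key : ∀ m ∈ g.support,
      (if n - 1 + 1 ≤ m then (-1 : k) ^ (m - (n - 1) - 1).natAbs * g m else 0)
      = (if m = n then g m else 0) - (if n + 1 ≤ m then (-1) ^ (m - n - 1).natAbs * g m else 0) := by
    intro m _
    rcases eq_or_ne m n with rfl | hmn
    · rw [if_pos (by omega : m - 1 + 1 ≤ m), if_pos rfl, if_neg (by omega), sub_zero,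
        (by omega : (m - (m - 1) - 1).natAbs = 0), pow_zero, one_mul]
    · rcases le_or_gt (n + 1) m with hle | hlt
      · have h2 : n - 1 + 1 ≤ m := by omega
        have h3 : (m - (n - 1) - 1).natAbs = (m - n - 1).natAbs + 1 := by omega
        rw [if_pos h2, if_neg hmn, if_pos hle, h3, pow_succ]
        ring
      · have h2 : ¬ (n - 1 + 1 ≤ m) := by omega
        have h4 : ¬ (n + 1 ≤ m) := by omega
        rw [if_neg h2, if_neg hmn, if_neg h4, sub_zero]
  rw [Finset.sum_congr rfl key, Finset.sum_sub_distrib, Finset.sum_ite_eq' g.support n]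
  congr 1
  split
  · rfl
  · rw [Finsupp.notMem_support_iff.mp (by assumption)]

lemma Afun_rec (g : ℤ →₀ k) (n : ℤ) (h0 : n ≠ 0) (h1 : n ≠ 1) :
    Afun g n + Afun g (n - 1) = -g n := by
  unfold Afun
  rcases le_or_gt n (-1) with hn | hn
  · rw [if_pos hn, if_pos (by omega : n - 1 ≤ -1)]
    have := Sneg_rec g n
    linear_combination -this
  · have hn2 : 2 ≤ n := by omega
    rw [if_neg (by omega), if_pos (by omega : 1 ≤ n), if_neg (by omega), if_pos (by omega : 1 ≤ n - 1)]
    have := Spos_rec g n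
    linear_combination -this

noncomputable def SA (g : ℤ →₀ k) : Finset ℤ :=
  g.support.biUnion fun m => Finset.Icc m (-1) ∪ Finset.Icc 1 (m - 1)

lemma Afun_support (g : ℤ →₀ k) (n : ℤ) (h : Afun g n ≠ 0) : n ∈ SA g := by
  unfold Afun at h
  split at h
  · rename_i hn
    rw [neg_ne_zero] at h
    obtain ⟨m, hm, hterm⟩ := Finset.exists_ne_zero_of_sum_ne_zero h
    have hmn : m ≤ n := by by_contra hc; simp [hc] at hterm
    exact Finset.mem_biUnion.mpr ⟨m, hm, Finset.mem_union_left _ (Finset.mem_Icc.mpr ⟨hmn, hn⟩)⟩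
  · split at h
    · rename_i hn' hn
      rw [neg_ne_zero] at h
      obtain ⟨m, hm, hterm⟩ := Finset.exists_ne_zero_of_sum_ne_zero h
      have hmn : n + 1 ≤ m := by by_contra hc; simp [hc] at hterm
      exact Finset.mem_biUnion.mpr
        ⟨m, hm, Finset.mem_union_right _ (Finset.mem_Icc.mpr ⟨hn, by omega⟩)⟩
    · exact absurd rfl h

noncomputable def hstep (g : ℤ →₀ k) : ℤ →₀ k :=
  Finsupp.onFinset (SA g) (Afun g) (Afun_support g)

@[simp] lemma hstep_apply (g : ℤ →₀ k) (n : ℤ) : hstep g n = Afun g n := rfl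

noncomputable def Conv (f h : ℤ →₀ k) (n : ℤ) : k :=
  h.sum fun s a => a * f (n - s)

lemma Conv_zero (f : ℤ →₀ k) (n : ℤ) : Conv f 0 n = 0 := Finsupp.sum_zero_index

lemma Conv_add (f h₁ h₂ : ℤ →₀ k) (n : ℤ) :
    Conv f (h₁ + h₂) n = Conv f h₁ n + Conv f h₂ n :=
  Finsupp.sum_add_index' (fun _ => zero_mul _) (fun _ b₁ b₂ => add_mul b₁ b₂ _)

noncomputable def Efun (f : ℤ →₀ k) (m : ℤ) : k := if m = 0 ∨ m = 1 then 0 else f m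

lemma Conv_eq (f hh : ℤ →₀ k) (hf0 : f 0 = 1) (hf1 : f 1 = 1) (n : ℤ) :
    Conv f hh n =
      (∑ s ∈ hh.support ∪ {n, n - 1}, hh s * Efun f (n - s)) + hh n + hh (n - 1) := by
  have h1 : Conv f hh n = ∑ s ∈ hh.support ∪ {n, n - 1}, hh s * f (n - s) :=
    Finsupp.sum_of_support_subset hh Finset.subset_union_left _ fun i _ => zero_mul _
  have key : ∀ s ∈ hh.support ∪ {n, n - 1},
      hh s * f (n - s) = hh s * Efun f (n - s)
        + ((if s = n then hh s else 0) + (if s = n - 1 then hh s else 0)) := by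
    intro s _
    rcases eq_or_ne s n with rfl | hsn
    · rw [sub_self, hf0, mul_one, if_pos rfl, if_neg (by omega), Efun, if_pos (Or.inl rfl)]
      ring
    · rcases eq_or_ne s (n - 1) with rfl | hsn1
      · rw [(by ring : n - (n - 1) = 1), hf1, mul_one, if_neg hsn, if_pos rfl, Efun,
          if_pos (Or.inr rfl)]
        ring
      · rw [if_neg hsn, if_neg hsn1, Efun, if_neg (by omega)]
        ring
  rw [h1, Finset.sum_congr rfl key, Finset.sum_add_distrib, Finset.sum_add_distrib,
    Finset.sum_ite_eq' _ n, Finset.sum_ite_eq' _ (n - 1),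
    if_pos (Finset.mem_union_right _ (by simp)),
    if_pos (Finset.mem_union_right _ (by simp))]
  ring

end Defs

section Mu
variable {k : Type*} [Field k] (val : k → WithTop ℝ)
    (hval_mul : ∀ a b : k, val (a * b) = val a + val b)
    (hval_add : ∀ a b : k, min (val a) (val b) ≤ val (a + b))
    (hval_top : ∀ a : k, val a = ⊤ ↔ a = 0)

noncomputable def mu (g : ℤ →₀ k) : WithTop ℝ :=
  (g.support.filter fun m => m ≠ 0 ∧ m ≠ 1).inf fun m => val (g m)

include hval_top in
lemma mu_le (g : ℤ →₀ k) (m : ℤ) (hm0 : m ≠ 0) (hm1 : m ≠ 1) : mu val g ≤ val (g m) := by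
  by_cases hm : m ∈ g.support
  · exact Finset.inf_le (Finset.mem_filter.mpr ⟨hm, hm0, hm1⟩)
  · rw [Finsupp.notMem_support_iff.mp hm, val_zero' val hval_top]; exact le_top

lemma lt_mu (g : ℤ →₀ k) (b : WithTop ℝ) (hbtop : b < ⊤)
    (hb : ∀ m, m ≠ 0 → m ≠ 1 → b < val (g m)) : b < mu val g :=
  (Finset.lt_inf_iff hbtop).mpr fun m hm =>
    hb m (Finset.mem_filter.mp hm).2.1 (Finset.mem_filter.mp hm).2.2

include hval_mul hval_add hval_top in
lemma val_Afun (g : ℤ →₀ k) (n : ℤ) : mu val g ≤ val (Afun g n) := by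
  unfold Afun
  split
  · rename_i hn
    rw [val_neg' val hval_mul hval_top]
    refine val_sum' val hval_add hval_top _ _ _ fun m hm => ?_
    split
    · rename_i hmn
      rw [val_neg_one_pow' val hval_mul hval_top]
      exact mu_le val hval_top g m (by omega) (by omega)
    · rw [val_zero' val hval_top]; exact le_top
  · split
    · rename_i hn' hn
      rw [val_neg' val hval_mul hval_top]
      refine val_sum' val hval_add hval_top _ _ _ fun m hm => ?_
      split
      · rename_i hmn
        rw [val_neg_one_pow' val hval_mul hval_top]
        exact mu_le val hval_top g m (by omega) (by omega)
      · rw [val_zero' val hval_top]; exact le_top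
    · rw [val_zero' val hval_top]; exact le_top

end Mu

section Main
variable {k : Type*} [Field k] (val : k → WithTop ℝ)
    (hval_mul : ∀ a b : k, val (a * b) = val a + val b)
    (hval_add : ∀ a b : k, min (val a) (val b) ≤ val (a + b))
    (hval_top : ∀ a : k, val a = ⊤ ↔ a = 0)
    (f : ℤ →₀ k) (hf0 : f 0 = 1) (hf1 : f 1 = 1)
    (ε : ℝ) (hε : 0 < ε)
    (hεE : ∀ m : ℤ, (ε : WithTop ℝ) ≤ val (Efun f m))

noncomputable def gnext (f g : ℤ →₀ k) (hf0 : f 0 = 1) (hf1 : f 1 = 1) : ℤ →₀ k :=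
  Finsupp.onFinset
    (g.support ∪ (hstep g).support.biUnion fun s => f.support.image (s + ·))
    (fun n => g n + Conv f (hstep g) n)
    (by
      intro n hne
      rcases ne_or_eq (g n) 0 with hgn | hgn
      · exact Finset.mem_union_left _ (Finsupp.mem_support_iff.mpr hgn)
      · have hc : Conv f (hstep g) n ≠ 0 := by
          intro h0; rw [hgn, h0, add_zero] at hne; exact hne rfl
        obtain ⟨s, hs, hterm⟩ := Finset.exists_ne_zero_of_sum_ne_zero hc
        have hterm' : (hstep g) s * f (n - s) ≠ 0 := hterm
        have hfs : f (n - s) ≠ 0 := fun h => hterm' (by rw [h, mul_zero])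
        refine Finset.mem_union_right _ (Finset.mem_biUnion.mpr ⟨s, hs, ?_⟩)
        exact Finset.mem_image.mpr ⟨n - s, Finsupp.mem_support_iff.mpr hfs, by ring⟩)

lemma gnext_apply (g : ℤ →₀ k) (n : ℤ) :
    gnext f g hf0 hf1 n = g n + Conv f (hstep g) n := rfl

include hval_mul hval_add hval_top hf0 hf1 hε hεE in
lemma step_lemma (g : ℤ →₀ k) (hg0 : val (g 0) = 0) (hg1 : val (g 1) = 0)
    (hgpos : ∀ n : ℤ, n ≠ 0 → n ≠ 1 → (0 : WithTop ℝ) < val (g n)) :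
    val (gnext f g hf0 hf1 0) = 0 ∧ val (gnext f g hf0 hf1 1) = 0 ∧
    (∀ n : ℤ, n ≠ 0 → n ≠ 1 → mu val g + (ε : WithTop ℝ) ≤ val (gnext f g hf0 hf1 n)) ∧
    (∀ s : ℤ, mu val g ≤ val (hstep g s)) := by
  have hmu_pos : (0 : WithTop ℝ) < mu val g :=
    lt_mu val g 0 (by exact_mod_cast WithTop.coe_lt_top (0 : ℝ)) hgpos
  have hA : ∀ s : ℤ, mu val g ≤ val (hstep g s) := fun s =>
    val_Afun val hval_mul hval_add hval_top g s
  have hR : ∀ n : ℤ, mu val g + (ε : WithTop ℝ) ≤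
      val (∑ s ∈ (hstep g).support ∪ {n, n - 1}, hstep g s * Efun f (n - s)) := by
    intro n
    refine val_sum' val hval_add hval_top _ _ _ fun s _ => ?_
    rw [hval_mul]
    exact add_le_add (hA s) (hεE _)
  have hmue_pos : (0 : WithTop ℝ) < mu val g + (ε : WithTop ℝ) :=
    lt_of_lt_of_le hmu_pos (le_add_of_nonneg_right (by exact_mod_cast hε.le))
  have hconv_pos : ∀ n : ℤ, (0 : WithTop ℝ) < val (Conv f (hstep g) n) := by
    intro n
    rw [Conv_eq f (hstep g) hf0 hf1 n]
    have p1 : (0 : WithTop ℝ) < val ((∑ s ∈ (hstep g).support ∪ {n, n - 1},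
        hstep g s * Efun f (n - s)) + hstep g n) :=
      lt_of_lt_of_le (lt_min (lt_of_lt_of_le hmue_pos (hR n)) (lt_of_lt_of_le hmu_pos (hA n)))
        (hval_add _ _)
    exact lt_of_lt_of_le
      (lt_min p1 (lt_of_lt_of_le hmu_pos (hA (n - 1)))) (hval_add _ _)
  refine ⟨?_, ?_, ?_, hA⟩
  · rw [gnext_apply, val_dom' val hval_mul hval_add hval_top _ _ (by rw [hg0]; exact hconv_pos 0)]
    exact hg0
  · rw [gnext_apply, val_dom' val hval_mul hval_add hval_top _ _ (by rw [hg1]; exact hconv_pos 1)]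
    exact hg1
  · intro n h0 h1
    have heq : gnext f g hf0 hf1 n =
        ∑ s ∈ (hstep g).support ∪ {n, n - 1}, hstep g s * Efun f (n - s) := by
      rw [gnext_apply, Conv_eq f (hstep g) hf0 hf1 n]
      have := Afun_rec g n h0 h1
      rw [hstep_apply, hstep_apply]
      linear_combination this
    rw [heq]
    exact hR n

include hval_mul hval_add hval_top hf0 hf1 hε hεE in
lemma main_induction (lam : ℝ) : ∀ N : ℕ, ∀ g : ℤ →₀ k,
    val (g 0) = 0 → val (g 1) = 0 →
    (∀ n : ℤ, n ≠ 0 → n ≠ 1 → (0 : WithTop ℝ) < val (g n)) →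
    (∀ n : ℤ, n ≠ 0 → n ≠ 1 → ((lam - N * ε : ℝ) : WithTop ℝ) < val (g n)) →
    ∃ h : ℤ →₀ k, (∀ s : ℤ, (0 : WithTop ℝ) < val (h s)) ∧
      val (g 0 + Conv f h 0) = 0 ∧ val (g 1 + Conv f h 1) = 0 ∧
      ∀ n : ℤ, n ≠ 0 → n ≠ 1 → ((lam : ℝ) : WithTop ℝ) < val (g n + Conv f h n) := by
  intro N
  induction N with
  | zero =>
    intro g hg0 hg1 hgpos hglam
    refine ⟨0, ?_, ?_, ?_, ?_⟩
    · intro s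
      rw [Finsupp.coe_zero, Pi.zero_apply, val_zero' val hval_top]
      exact_mod_cast WithTop.coe_lt_top (0 : ℝ)
    · rw [Conv_zero, add_zero]; exact hg0
    · rw [Conv_zero, add_zero]; exact hg1
    · intro n h0 h1
      rw [Conv_zero, add_zero]
      have := hglam n h0 h1
      norm_num at this
      exact this
  | succ N ih =>
    intro g hg0 hg1 hgpos hglam
    obtain ⟨hn0, hn1, hnbad, hAbound⟩ :=
      step_lemma val hval_mul hval_add hval_top f hf0 hf1 ε hε hεE g hg0 hg1 hgpos
    have hmu_pos : (0 : WithTop ℝ) < mu val g :=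
      lt_mu val g 0 (by exact_mod_cast WithTop.coe_lt_top (0 : ℝ)) hgpos
    have hmu_lam : ((lam - (N + 1) * ε : ℝ) : WithTop ℝ) < mu val g :=
      lt_mu val g _ (WithTop.coe_lt_top _) (by
        intro m hm0 hm1
        have := hglam m hm0 hm1
        push_cast at this ⊢
        convert this using 2)
    have hg'pos : ∀ n : ℤ, n ≠ 0 → n ≠ 1 → (0 : WithTop ℝ) < val (gnext f g hf0 hf1 n) := by
      intro n h0 h1
      calc (0 : WithTop ℝ) < mu val g + (ε : WithTop ℝ) :=
            lt_of_lt_of_le hmu_pos (le_add_of_nonneg_right (by exact_mod_cast hε.le))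
      _ ≤ val (gnext f g hf0 hf1 n) := hnbad n h0 h1
    have hg'lam : ∀ n : ℤ, n ≠ 0 → n ≠ 1 →
        ((lam - N * ε : ℝ) : WithTop ℝ) < val (gnext f g hf0 hf1 n) := by
      intro n h0 h1
      have h2 : ((lam - (N + 1) * ε : ℝ) : WithTop ℝ) + (ε : WithTop ℝ)
          < mu val g + (ε : WithTop ℝ) :=
        WithTop.add_lt_add_right WithTop.coe_ne_top hmu_lam
      have h3 : ((lam - (N + 1) * ε : ℝ) : WithTop ℝ) + (ε : WithTop ℝ)
          = ((lam - N * ε : ℝ) : WithTop ℝ) := by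
        rw [← WithTop.coe_add, WithTop.coe_eq_coe]
        ring
      rw [h3] at h2
      exact lt_of_lt_of_le h2 (hnbad n h0 h1)
    obtain ⟨h₁, hh₁pos, hc0, hc1, hclam⟩ := ih (gnext f g hf0 hf1) hn0 hn1 hg'pos hg'lam
    refine ⟨hstep g + h₁, ?_, ?_, ?_, ?_⟩
    · intro s
      have := hval_add (hstep g s) (h₁ s)
      rw [Finsupp.add_apply]
      exact lt_of_lt_of_le
        (lt_min (lt_of_lt_of_le hmu_pos (hAbound s)) (hh₁pos s)) (hval_add _ _)
    · rw [Conv_add, ← add_assoc, ← gnext_apply f hf0 hf1]; exact hc0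
    · rw [Conv_add, ← add_assoc, ← gnext_apply f hf0 hf1]; exact hc1
    · intro n h0 h1
      rw [Conv_add, ← add_assoc, ← gnext_apply f hf0 hf1]
      exact hclam n h0 h1

end Main

theorem stmt2 {k : Type*} [Field k] (val : k → WithTop ℝ)
    (hval_mul : ∀ a b : k, val (a * b) = val a + val b)
    (hval_add : ∀ a b : k, min (val a) (val b) ≤ val (a + b))
    (hval_top : ∀ a : k, val a = ⊤ ↔ a = 0)
    (lam : ℝ) (hlam : 0 ≤ lam)
    (f g : ℤ →₀ k)
    (hf0 : f 0 = 1) (hf1 : f 1 = 1)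
    (hf : ∀ n : ℤ, n ≠ 0 → n ≠ 1 → (0 : WithTop ℝ) < val (f n))
    (hg0 : val (g 0) = (0 : WithTop ℝ)) (hg1 : val (g 1) = (0 : WithTop ℝ))
    (hg : ∀ n : ℤ, n ≠ 0 → n ≠ 1 → (0 : WithTop ℝ) < val (g n)) :
    ∃ h : ℤ →₀ k,
      (∀ s : ℤ, (0 : WithTop ℝ) < val (h s)) ∧
      val (g 0 + h.sum fun s a => a * f (0 - s)) = (0 : WithTop ℝ) ∧
      val (g 1 + h.sum fun s a => a * f (1 - s)) = (0 : WithTop ℝ) ∧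
      ∀ n : ℤ, n ≠ 0 → n ≠ 1 →
        ((lam : ℝ) : WithTop ℝ) < val (g n + h.sum fun s a => a * f (n - s)) := by
  -- choose ε
  have hmuf : (0 : WithTop ℝ) < mu val f :=
    lt_mu val f 0 (by exact_mod_cast WithTop.coe_lt_top (0 : ℝ)) hf
  obtain ⟨ε, hε, hεE⟩ : ∃ ε : ℝ, 0 < ε ∧ ∀ m : ℤ, (ε : WithTop ℝ) ≤ val (Efun f m) := by
    by_cases htop : mu val f = ⊤
    · refine ⟨1, one_pos, fun m => ?_⟩
      unfold Efun
      split
      · rw [val_zero' val hval_top]; exact le_top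
      · rename_i hm
        push_neg at hm
        have := mu_le val hval_top f m hm.1 hm.2
        rw [htop, top_le_iff] at this
        rw [this]; exact le_top
    · lift mu val f to ℝ using htop with r hr
      refine ⟨r, by exact_mod_cast hmuf, fun m => ?_⟩
      unfold Efun
      split
      · rw [val_zero' val hval_top]; exact le_top
      · rename_i hm
        push_neg at hm
        rw [hr]
        exact mu_le val hval_top f m hm.1 hm.2
  set N : ℕ := ⌈lam / ε⌉₊ with hN
  have hlamN : lam - N * ε ≤ 0 := by
    have h1 : lam / ε ≤ (N : ℝ) := Nat.le_ceil _
    have h2 : lam ≤ N * ε := by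
      rw [div_le_iff₀ hε] at h1
      linarith
    linarith
  obtain ⟨h, hhpos, h0, h1, hbad⟩ := main_induction val hval_mul hval_add hval_top f hf0 hf1
    ε hε hεE lam N g hg0 hg1 hg
    (fun n hn0 hn1 => lt_of_le_of_lt
      (by exact_mod_cast hlamN : ((lam - N * ε : ℝ) : WithTop ℝ) ≤ (0 : WithTop ℝ))
      (hg n hn0 hn1))
  exact ⟨h, hhpos, h0, h1, hbad⟩
end

section
/- Let f = Σ_n c_n x^n ∈ k[x^{±1}] satisfy c₀ = c₁ = 1, let λ₀ := min{val(c_n) : n ∈ ℤ∖{0,1}, c_n ≠ 0} and assume f has at least one nonzero coefficient outside {0,1} and λ₀ > 0. Let g = Σ_n d_n x^n ∈ k[x^{±1}] satisfy val(d₀) = val(d₁) = 0, have at least one nonzero coefficient outside {0,1}, and λ₁ := min{val(d_n) : n ∈ ℤ∖{0,1}, d_n ≠ 0} > 0. For a Laurent polynomial F define M₋(F) := min({n ∈ ℤ : n ≤ 0, val(F_n) < λ₀+λ₁} ∪ {0}) and M₊(F) := max({n ∈ ℤ : n ≥ 1, val(F_n) < λ₀+λ₁} ∪ {1}). If M₊(g)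 − M₋(g) > 1, then there exist a ∈ k with val(a) > 0 and i ∈ ℤ such that the Laurent polynomial g̃ := g − a x^i f satisfies val(g̃₀) = val(g̃₁) = 0 and M₊(g̃) − M₋(g̃) < M₊(g) − M₋(g). -/
/-- `λ(F) = min { val(F_n) : n ∈ ℤ \ {0,1}, F_n ≠ 0 }` (as an infimum in `ℝ ∪ {∞}`). -/
noncomputable def lamv {k : Type*} [Field k] (val : k → WithTop ℝ) (F : ℤ →₀ k) : WithTop ℝ :=
  sInf {x : WithTop ℝ | ∃ n : ℤ, n ≠ 0 ∧ n ≠ 1 ∧ F n ≠ 0 ∧ val (F n) = x}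

/-- `M₋(F) = min ({ n ≤ 0 : val(F_n) < c } ∪ {0})`. -/
noncomputable def Mminus {k : Type*} [Field k] (val : k → WithTop ℝ) (c : WithTop ℝ)
    (F : ℤ →₀ k) : ℤ :=
  sInf ({n : ℤ | n ≤ 0 ∧ val (F n) < c} ∪ {0})

/-- `M₊(F) = max ({ n ≥ 1 : val(F_n) < c } ∪ {1})`. -/
noncomputable def Mplus {k : Type*} [Field k] (val : k → WithTop ℝ) (c : WithTop ℝ)
    (F : ℤ →₀ k) : ℤ :=
  sSup ({n : ℤ | 1 ≤ n ∧ val (F n) < c} ∪ {1})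

private lemma wt_self_add {x : WithTop ℝ} (hx : x ≠ ⊤) (h : x = x + x) : x = 0 := by
  obtain ⟨r, rfl⟩ := (WithTop.ne_top_iff_exists.mp hx)
  have : r = r + r := by exact_mod_cast h
  have : r = 0 := by linarith
  simp [this]

theorem stmt3 {k : Type*} [Field k] (val : k → WithTop ℝ)
    (hval_mul : ∀ a b : k, val (a * b) = val a + val b)
    (hval_add : ∀ a b : k, min (val a) (val b) ≤ val (a + b))
    (hval_top : ∀ a : k, val a = ⊤ ↔ a = 0)
    (f g : ℤ →₀ k)
    (hf0 : f 0 = 1) (hf1 : f 1 = 1)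
    (hfne : ∃ n : ℤ, n ≠ 0 ∧ n ≠ 1 ∧ f n ≠ 0)
    (hlam0 : 0 < lamv val f)
    (hg0 : val (g 0) = (0 : WithTop ℝ)) (hg1 : val (g 1) = (0 : WithTop ℝ))
    (hgne : ∃ n : ℤ, n ≠ 0 ∧ n ≠ 1 ∧ g n ≠ 0)
    (hlam1 : 0 < lamv val g)
    (hM : 1 < Mplus val (lamv val f + lamv val g) g - Mminus val (lamv val f + lamv val g) g) :
    ∃ (a : k) (i : ℤ),
      (0 : WithTop ℝ) < val a ∧
      val ((g - a • f.mapDomain (fun n => n + i)) 0) = (0 : WithTop ℝ) ∧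
      val ((g - a • f.mapDomain (fun n => n + i)) 1) = (0 : WithTop ℝ) ∧
      Mplus val (lamv val f + lamv val g) (g - a • f.mapDomain (fun n => n + i)) -
          Mminus val (lamv val f + lamv val g) (g - a • f.mapDomain (fun n => n + i)) <
        Mplus val (lamv val f + lamv val g) g - Mminus val (lamv val f + lamv val g) g := by
  set c : WithTop ℝ := lamv val f + lamv val g with hc
  -- basic valuation facts
  have hval1 : val 1 = 0 := by
    have h := hval_mul 1 1
    rw [one_mul] at h
    exact wt_self_add (by simp [hval_top]) h
  have hvalneg : ∀ b : k, val (-b) = val b := by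
    have hm1 : val (-1 : k) = 0 := by
      have h := hval_mul (-1 : k) (-1)
      rw [neg_one_mul, neg_neg, hval1] at h
      have hne : val (-1 : k) ≠ ⊤ := by simp [hval_top]
      obtain ⟨r, hr⟩ := WithTop.ne_top_iff_exists.mp hne
      rw [← hr] at h ⊢
      have : (0 : ℝ) = r + r := by exact_mod_cast h
      have : r = 0 := by linarith
      simp [this]
    intro b
    rw [show -b = -1 * b by ring, hval_mul, hm1, zero_add]
  have hsub_ge : ∀ b t : k, min (val b) (val t) ≤ val (b - t) := by
    intro b t
    have := hval_add b (-t)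
    rwa [hvalneg, ← sub_eq_add_neg] at this
  have hsub : ∀ b t : k, val b < val t → val (b - t) = val b := by
    intro b t hlt
    have h1 : val b ≤ val (b - t) := by
      have := hsub_ge b t
      rwa [min_eq_left hlt.le] at this
    have h2 : val (b - t) ≤ val b := by
      have h3 := hval_add (b - t) t
      rw [sub_add_cancel] at h3
      by_contra hcon
      push_neg at hcon
      rcases min_le_iff.mp h3 with h | h
      · exact absurd h (not_le.mpr hcon)
      · exact absurd h (not_le.mpr hlt)
    exact le_antisymm h2 h1
  -- coefficients of the modified polynomial
  have hcoeff : ∀ (a : k) (i n : ℤ),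
      (g - a • f.mapDomain (fun m => m + i)) n = g n - a * f (n - i) := by
    intro a i n
    have hmap : (f.mapDomain (fun m => m + i)) n = f (n - i) := by
      have h := Finsupp.mapDomain_apply (add_left_injective i) f (n - i)
      simpa using h
    simp [Finsupp.sub_apply, Finsupp.smul_apply, hmap, smul_eq_mul]
  have hne_of_lt : ∀ (x : k) (d : WithTop ℝ), val x < d → x ≠ 0 := by
    intro x d hx h0
    rw [h0, (hval_top 0).mpr rfl] at hx
    exact absurd hx not_top_lt
  have hlamle : ∀ (F : ℤ →₀ k) (m : ℤ), m ≠ 0 → m ≠ 1 → F m ≠ 0 →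
      lamv val F ≤ val (F m) := by
    intro F m h0 h1 hz
    have hsub' : {x : WithTop ℝ | ∃ n : ℤ, n ≠ 0 ∧ n ≠ 1 ∧ F n ≠ 0 ∧ val (F n) = x}
        ⊆ (fun n => val (F n)) '' ↑F.support := by
      rintro x ⟨n, -, -, hn, rfl⟩
      exact ⟨n, by simpa using hn, rfl⟩
    have hfin' : {x : WithTop ℝ | ∃ n : ℤ, n ≠ 0 ∧ n ≠ 1 ∧ F n ≠ 0 ∧ val (F n) = x}.Finite :=
      ((F.support.finite_toSet).image _).subset hsub'
    exact csInf_le hfin'.bddBelow ⟨m, h0, h1, hz, rfl⟩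
  have hfge : ∀ m : ℤ, m ≠ 0 → m ≠ 1 → lamv val f ≤ val (f m) := by
    intro m h0 h1
    by_cases hz : f m = 0
    · rw [hz, (hval_top 0).mpr rfl]; exact le_top
    · exact hlamle f m h0 h1 hz
  have hgge : ∀ m : ℤ, m ≠ 0 → m ≠ 1 → g m ≠ 0 → lamv val g ≤ val (g m) :=
    fun m h0 h1 hz => hlamle g m h0 h1 hz
  have hfge0 : ∀ m : ℤ, 0 ≤ val (f m) := by
    intro m
    by_cases h0 : m = 0
    · simp [h0, hf0, hval1]
    by_cases h1 : m = 1
    · simp [h1, hf1, hval1]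
    exact le_trans hlam0.le (hfge m h0 h1)
  -- boundedness facts
  have hfin : ∀ (F : ℤ →₀ k) (P : ℤ → Prop), ({n : ℤ | P n ∧ val (F n) < c}).Finite := by
    intro F P
    apply Set.Finite.subset F.support.finite_toSet
    intro n hn
    simp only [Finset.coe_sort_coe, Finset.mem_coe, Finsupp.mem_support_iff]
    exact hne_of_lt _ _ hn.2
  have hbddB : ∀ F : ℤ →₀ k, BddBelow ({n : ℤ | n ≤ 0 ∧ val (F n) < c} ∪ {0}) := fun F =>
    ((hfin F _).union (Set.finite_singleton 0)).bddBelow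
  have hbddA : ∀ F : ℤ →₀ k, BddAbove ({n : ℤ | 1 ≤ n ∧ val (F n) < c} ∪ {1}) := fun F =>
    ((hfin F _).union (Set.finite_singleton 1)).bddAbove
  have hMm_le : ∀ F : ℤ →₀ k, Mminus val c F ≤ 0 := fun F =>
    csInf_le (hbddB F) (Or.inr rfl)
  have hMp_ge : ∀ F : ℤ →₀ k, 1 ≤ Mplus val c F := fun F =>
    le_csSup (hbddA F) (Or.inr rfl)
  have hMm_le' : ∀ (F : ℤ →₀ k) (n : ℤ), n ≤ 0 → val (F n) < c → Mminus val c F ≤ n :=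
    fun F n h1 h2 => csInf_le (hbddB F) (Or.inl ⟨h1, h2⟩)
  have hMp_ge' : ∀ (F : ℤ →₀ k) (n : ℤ), 1 ≤ n → val (F n) < c → n ≤ Mplus val c F :=
    fun F n h1 h2 => le_csSup (hbddA F) (Or.inl ⟨h1, h2⟩)
  have hMm_lb : ∀ (F : ℤ →₀ k) (b : ℤ), b ≤ 0 →
      (∀ n : ℤ, n ≤ 0 → val (F n) < c → b ≤ n) → b ≤ Mminus val c F := by
    intro F b hb h
    apply le_csInf ((Set.singleton_nonempty 0).inr)
    rintro n (⟨h1, h2⟩ | h1)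
    · exact h n h1 h2
    · simp only [Set.mem_singleton_iff] at h1; omega
  have hMp_ub : ∀ (F : ℤ →₀ k) (b : ℤ), 1 ≤ b →
      (∀ n : ℤ, 1 ≤ n → val (F n) < c → n ≤ b) → Mplus val c F ≤ b := by
    intro F b hb h
    apply csSup_le ((Set.singleton_nonempty 1).inr)
    rintro n (⟨h1, h2⟩ | h1)
    · exact h n h1 h2
    · simp only [Set.mem_singleton_iff] at h1; omega
  have hMm_mem : Mminus val c g ∈ ({n : ℤ | n ≤ 0 ∧ val (g n) < c} ∪ {0}) :=
    Int.csInf_mem ((Set.singleton_nonempty 0).inr) (hbddB g)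
  have hMp_mem : Mplus val c g ∈ ({n : ℤ | 1 ≤ n ∧ val (g n) < c} ∪ {1}) :=
    Int.csSup_mem ((Set.singleton_nonempty 1).inr) (hbddA g)
  set Mp := Mplus val c g with hMp
  set Mm := Mminus val c g with hMm
  -- key uniform bounds for a given choice of a
  have key : ∀ a : k, lamv val g ≤ val a →
      (∀ m : ℤ, 0 < val (a * f m)) ∧
      (∀ m : ℤ, m ≠ 0 → m ≠ 1 → c ≤ val (a * f m)) := by
    intro a hva
    have hva0 : 0 < val a := lt_of_lt_of_le hlam1 hva
    constructor
    · intro m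
      rw [hval_mul]
      exact lt_of_lt_of_le hva0 (le_add_of_nonneg_right (hfge0 m))
    · intro m h0 h1
      rw [hval_mul, hc]
      calc lamv val f + lamv val g ≤ val (f m) + val a := add_le_add (hfge m h0 h1) hva
        _ = val a + val (f m) := add_comm _ _
  rcases (by omega : 2 ≤ Mp ∨ Mm ≤ -1) with hcase | hcase
  · -- use the top index e = Mp, shift i = Mp - 1 (f's coefficient at 1 hits e)
    have hmem : 1 ≤ Mp ∧ val (g Mp) < c := by
      rcases hMp_mem with h | h
      · exact h
      · simp only [Set.mem_singleton_iff] at h; omega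
    set a := g Mp with ha
    set i := Mp - 1 with hi
    have hane : a ≠ 0 := hne_of_lt _ _ hmem.2
    have hva : lamv val g ≤ val a := hgge Mp (by omega) (by omega) hane
    have hva0 : 0 < val a := lt_of_lt_of_le hlam1 hva
    obtain ⟨hpos, hbig⟩ := key a hva
    refine ⟨a, i, hva0, ?_, ?_, ?_⟩
    · rw [hcoeff, hsub _ _ (by rw [hg0]; exact hpos _), hg0]
    · rw [hcoeff, hsub _ _ (by rw [hg1]; exact hpos _), hg1]
    · set G := g - a • f.mapDomain (fun m => m + i) with hG
      have hGz : G Mp = 0 := by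
        rw [hG, hcoeff, show Mp - i = 1 by omega, hf1, mul_one, ha, sub_self]
      have hMpG : Mplus val c G ≤ Mp - 1 := by
        apply hMp_ub G (Mp - 1) (by omega)
        intro n h1 h2
        by_contra hcon
        push_neg at hcon
        by_cases hEq : n = Mp
        · rw [hEq, hGz, (hval_top 0).mpr rfl] at h2
          exact absurd h2 not_top_lt
        · have hgt : Mp < n := by omega
          have hgn : c ≤ val (g n) := by
            by_contra hgn
            push_neg at hgn
            have := hMp_ge' g n h1 hgn
            omega
          have hfn : c ≤ val (a * f (n - i)) := hbig _ (by omega) (by omega)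
          have := hsub_ge (g n) (a * f (n - i))
          rw [← hcoeff, ← hG] at this
          rcases min_le_iff.mp this with h | h
          · exact absurd h2 (not_lt.mpr (le_trans hgn h))
          · exact absurd h2 (not_lt.mpr (le_trans hfn h))
      have hMmG : Mm ≤ Mminus val c G := by
        apply hMm_lb G Mm (hMm_le g)
        intro n h1 h2
        have hfn : c ≤ val (a * f (n - i)) := hbig _ (by omega) (by omega)
        have := hsub_ge (g n) (a * f (n - i))
        rw [← hcoeff, ← hG] at this
        rcases min_le_iff.mp this with h | h
        · by_contra hcon
          push_neg at hcon
          exact absurd (hMm_le' g n h1 (lt_of_le_of_lt h h2)) (not_le.mpr hcon)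
        · exact absurd h2 (not_lt.mpr (le_trans hfn h))
      omega
  · -- use the bottom index e = Mm, shift i = Mm (f's coefficient at 0 hits e)
    have hmem : Mm ≤ 0 ∧ val (g Mm) < c := by
      rcases hMm_mem with h | h
      · exact h
      · simp only [Set.mem_singleton_iff] at h; omega
    set a := g Mm with ha
    set i := Mm with hi
    have hane : a ≠ 0 := hne_of_lt _ _ hmem.2
    have hva : lamv val g ≤ val a := hgge Mm (by omega) (by omega) hane
    have hva0 : 0 < val a := lt_of_lt_of_le hlam1 hva
    obtain ⟨hpos, hbig⟩ := key a hva
    refine ⟨a, i, hva0, ?_, ?_, ?_⟩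
    · rw [hcoeff, hsub _ _ (by rw [hg0]; exact hpos _), hg0]
    · rw [hcoeff, hsub _ _ (by rw [hg1]; exact hpos _), hg1]
    · set G := g - a • f.mapDomain (fun m => m + i) with hG
      have hGz : G Mm = 0 := by
        rw [hG, hcoeff, show Mm - i = 0 by omega, hf0, mul_one, ha, sub_self]
      have hMpG : Mplus val c G ≤ Mp := by
        apply hMp_ub G Mp (hMp_ge g)
        intro n h1 h2
        have hfn : c ≤ val (a * f (n - i)) := hbig _ (by omega) (by omega)
        have := hsub_ge (g n) (a * f (n - i))
        rw [← hcoeff, ← hG] at this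
        rcases min_le_iff.mp this with h | h
        · exact hMp_ge' g n h1 (lt_of_le_of_lt h h2)
        · exact absurd h2 (not_lt.mpr (le_trans hfn h))
      have hMmG : Mm + 1 ≤ Mminus val c G := by
        apply hMm_lb G (Mm + 1) (by omega)
        intro n h1 h2
        by_contra hcon
        push_neg at hcon
        by_cases hEq : n = Mm
        · rw [hEq, hGz, (hval_top 0).mpr rfl] at h2
          exact absurd h2 not_top_lt
        · have hlt : n < Mm := by omega
          have hgn : c ≤ val (g n) := by
            by_contra hgn
            push_neg at hgn
            have := hMm_le' g n h1 hgn
            omega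
          have hfn : c ≤ val (a * f (n - i)) := hbig _ (by omega) (by omega)
          have := hsub_ge (g n) (a * f (n - i))
          rw [← hcoeff, ← hG] at this
          rcases min_le_iff.mp this with h | h
          · exact absurd h2 (not_lt.mpr (le_trans hgn h))
          · exact absurd h2 (not_lt.mpr (le_trans hfn h))
      omega
end

section
/- Let f ∈ k[x^{±1}, y^{±1}] be a Laurent polynomial with coefficient family (c_i)_{i∈ℤ²}, let i₀ ∈ ℤ², let v ∈ ℤ² be primitive (coprime coordinates), and set i₁ := i₀ + v. Assume c_{i₀} ≠ 0, c_{i₁} ≠ 0, and let P ∈ ℝ² be a point with τ(f; i₀; P) = τ(f; i₁; P). Let h(t) = Σ_s a_s t^s ∈ k[t^{±1}] be a Laurent polynomial with val(a_s) > s·(val(c_{i₁}) − val(c_{i₀})) for every s ∈ ℤ. Then for every i ∈ ℤ² such that c_{i+sv} ≠ 0 for at least one s ∈ ℤ, one has τ(h(x^v)·f; i; P) < max_{s∈ℤ} τ(f; i+sv; P), where h(x^v)·f denotes the Laurent polynomial whose coefficient at i is Σ_s a_s c_{i−sv}. -/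
/-- Interpret a value in `ℝ ∪ {∞}` as an extended real number. -/
noncomputable def wte (x : WithTop ℝ) : EReal :=
  WithTop.recTopCoe ⊤ (fun r : ℝ => (r : EReal)) x

/-- `τ(F; i; P) = -val(F_i) + i·P ∈ ℝ ∪ {-∞}`. -/
noncomputable def tau {k : Type*} [Field k] (val : k → WithTop ℝ)
    (F : ℤ × ℤ → k) (i : ℤ × ℤ) (P : ℝ × ℝ) : EReal :=
  -(wte (val (F i))) + (((i.1 : ℝ) * P.1 + (i.2 : ℝ) * P.2 : ℝ) : EReal)

private lemma tau_coe {k : Type*} [Field k] (val : k → WithTop ℝ)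
    (F : ℤ × ℤ → k) (i : ℤ × ℤ) (P : ℝ × ℝ) (r : ℝ) (hr : val (F i) = (r : WithTop ℝ)) :
    tau val F i P = (((-r + ((i.1 : ℝ) * P.1 + (i.2 : ℝ) * P.2)) : ℝ) : EReal) := by
  simp [tau, wte, hr]

private lemma val_sum_ge {k : Type*} [Field k] (val : k → WithTop ℝ)
    (hval_add : ∀ a b : k, min (val a) (val b) ≤ val (a + b))
    (hval_top : ∀ a : k, val a = ⊤ ↔ a = 0)
    {ι : Type*} (S : Finset ι) (m : ι → k) :
    S.inf (fun s => val (m s)) ≤ val (S.sum m) := by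
  induction S using Finset.cons_induction with
  | empty => simp [(hval_top 0).2 rfl]
  | cons a S ha ih =>
    rw [Finset.sum_cons, Finset.inf_cons]
    exact le_trans (min_le_min le_rfl ih) (hval_add _ _)

theorem stmt5 {k : Type*} [Field k] (val : k → WithTop ℝ)
    (hval_mul : ∀ a b : k, val (a * b) = val a + val b)
    (hval_add : ∀ a b : k, min (val a) (val b) ≤ val (a + b))
    (hval_top : ∀ a : k, val a = ⊤ ↔ a = 0)
    (f : (ℤ × ℤ) →₀ k) (i₀ : ℤ × ℤ) (v : ℤ × ℤ) (hprim : IsCoprime v.1 v.2)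
    (hc0 : f i₀ ≠ 0) (hc1 : f (i₀ + v) ≠ 0)
    (α β : ℝ)
    (hα : val (f i₀) = (α : WithTop ℝ)) (hβ : val (f (i₀ + v)) = (β : WithTop ℝ))
    (P : ℝ × ℝ)
    (hP : tau val (⇑f) i₀ P = tau val (⇑f) (i₀ + v) P)
    (h : ℤ →₀ k)
    (hh : ∀ s : ℤ, (((s : ℝ) * (β - α) : ℝ) : WithTop ℝ) < val (h s)) :
    ∀ i : ℤ × ℤ, (∃ s : ℤ, f (i + s • v) ≠ 0) →
      tau val (fun j => h.sum fun s a => a * f (j - s • v)) i P <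
        ⨆ s : ℤ, tau val (⇑f) (i + s • v) P := by
  have hdv : (v.1 : ℝ) * P.1 + (v.2 : ℝ) * P.2 = β - α := by
    have h1 := tau_coe val f i₀ P α hα
    have h2 := tau_coe val f (i₀ + v) P β hβ
    rw [hP, h2] at h1
    have h3 : -β + (((i₀ + v).1 : ℝ) * P.1 + ((i₀ + v).2 : ℝ) * P.2)
        = -α + ((i₀.1 : ℝ) * P.1 + (i₀.2 : ℝ) * P.2) := by
      exact_mod_cast h1
    have e1 : ((i₀ + v).1 : ℝ) = (i₀.1 : ℝ) + (v.1 : ℝ) := by push_cast [Prod.fst_add]; ring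
    have e2 : ((i₀ + v).2 : ℝ) = (i₀.2 : ℝ) + (v.2 : ℝ) := by push_cast [Prod.snd_add]; ring
    rw [e1, e2] at h3
    nlinarith [h3]
  rintro i ⟨s₀, hs₀⟩
  by_cases hg : (h.sum fun s a => a * f (i - s • v)) = 0
  · have hval0 : val ((fun j => h.sum fun s a => a * f (j - s • v)) i) = ⊤ :=
      (hval_top _).2 hg
    have hL : tau val (fun j => h.sum fun s a => a * f (j - s • v)) i P = ⊥ := by
      unfold tau
      rw [hval0]
      show -(wte ⊤) + _ = ⊥
      rw [show wte ⊤ = ⊤ from rfl, EReal.neg_top, EReal.bot_add]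
    obtain ⟨r, hr⟩ := WithTop.ne_top_iff_exists.1 (fun ht => hs₀ ((hval_top _).1 ht))
    refine lt_of_lt_of_le ?_ (le_iSup (fun s => tau val (⇑f) (i + s • v) P) s₀)
    rw [hL, tau_coe val f (i + s₀ • v) P r hr.symm]
    exact EReal.bot_lt_coe _
  · have hvg_ne : val (h.sum fun s a => a * f (i - s • v)) ≠ ⊤ :=
      fun ht => hg ((hval_top _).1 ht)
    obtain ⟨ε, hε⟩ := WithTop.ne_top_iff_exists.1 hvg_ne
    have hsupp : h.support.Nonempty := by
      rcases Finset.eq_empty_or_nonempty h.support with he | hne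
      · exact absurd (by rw [Finsupp.sum, he, Finset.sum_empty]) hg
      · exact hne
    obtain ⟨s, hs, hinf⟩ :=
      Finset.exists_mem_eq_inf h.support hsupp (fun s => val (h s * f (i - s • v)))
    have hle : val (h s * f (i - s • v)) ≤ val (h.sum fun s a => a * f (i - s • v)) := by
      rw [← hinf]
      exact val_sum_ge val hval_add hval_top h.support (fun s => h s * f (i - s • v))
    rw [hval_mul] at hle
    have hne2 : val (h s) + val (f (i - s • v)) ≠ ⊤ := by
      intro ht; rw [ht, top_le_iff] at hle; exact hvg_ne hle
    obtain ⟨hhs_ne, hf_ne⟩ := WithTop.add_ne_top.1 hne2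
    obtain ⟨δ, hδ⟩ := WithTop.ne_top_iff_exists.1 hhs_ne
    obtain ⟨γ, hγ⟩ := WithTop.ne_top_iff_exists.1 hf_ne
    have hδα : (s : ℝ) * (β - α) < δ := by
      have := hh s; rw [← hδ] at this; exact_mod_cast this
    have hεge : δ + γ ≤ ε := by
      rw [← hδ, ← hγ, ← hε, ← WithTop.coe_add] at hle
      exact_mod_cast hle
    have heq : i + (-s) • v = i - s • v := by rw [neg_smul, ← sub_eq_add_neg]
    have hexp : ((i - s • v).1 : ℝ) * P.1 + ((i - s • v).2 : ℝ) * P.2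
        = ((i.1 : ℝ) * P.1 + (i.2 : ℝ) * P.2) - (s : ℝ) * (β - α) := by
      rw [← hdv]
      have e1 : ((i - s • v).1 : ℝ) = (i.1 : ℝ) - (s : ℝ) * (v.1 : ℝ) := by
        push_cast [Prod.fst_sub, Prod.smul_fst, smul_eq_mul]; ring
      have e2 : ((i - s • v).2 : ℝ) = (i.2 : ℝ) - (s : ℝ) * (v.2 : ℝ) := by
        push_cast [Prod.snd_sub, Prod.smul_snd, smul_eq_mul]; ring
      rw [e1, e2]; ring
    refine lt_of_lt_of_le ?_ (le_iSup (fun s => tau val (⇑f) (i + s • v) P) (-s))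
    rw [tau_coe val _ i P ε (by simpa using hε.symm), heq,
      tau_coe val f (i - s • v) P γ hγ.symm]
    rw [EReal.coe_lt_coe_iff, hexp]
    linarith
end

section
/- Let G ∈ k[x^{±1}, y^{±1}] be a nonzero Laurent polynomial with coefficient family (e_i)_{i∈ℤ²}, let p₁, y₊ ∈ ℝ, let λ ≥ 0, let a ∈ ℤ and set i₊ := (a, 1). Let S := {(p₁, t) : y₊ − λ ≤ t ≤ y₊}. Assume: (a) val(e_{i₊}) = a·p₁ + y₊ (equivalently, τ(G; i₊; (p₁, t)) = t − y₊ for all t); (b) val(e_{(0,0)}) ≥ 0 (with val(0) = ∞); (c) for every P ∈ S and every i ∈ ℤ² with i ∉ {(0,0), i₊}, τ(G; i; P) < max{τ(G; (0,0); P), τ(G; i₊; P)}. Then: if val(e_{(0,0)}) ≤ λ, the intersection of the tropical curve V(trop(G)) with S is exactly the single point {(p₁, y₊ − val(e_{(0,0)}))}; and if val(e_{(0,0)}) > λ (including e_{(0,0)} = 0), then V(trop(G)) ∩ S = ∅. -/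
/-- The tropical curve of a Laurent polynomial: the set of points where the maximum
`max_i τ(G; i; P)` is attained by at least two distinct indices. -/
noncomputable def tropCurve {k : Type*} [Field k] (val : k → WithTop ℝ)
    (G : (ℤ × ℤ) →₀ k) : Set (ℝ × ℝ) :=
  {P | ∃ i j : ℤ × ℤ, i ≠ j ∧
    tau val (⇑G) i P = (⨆ l : ℤ × ℤ, tau val (⇑G) l P) ∧
    tau val (⇑G) j P = (⨆ l : ℤ × ℤ, tau val (⇑G) l P)}

theorem stmt8 {k : Type*} [Field k] (val : k → WithTop ℝ)
    (hval_mul : ∀ a b : k, val (a * b) = val a + val b)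
    (hval_add : ∀ a b : k, min (val a) (val b) ≤ val (a + b))
    (hval_top : ∀ a : k, val a = ⊤ ↔ a = 0)
    (G : (ℤ × ℤ) →₀ k) (hG : G ≠ 0)
    (p₁ yp : ℝ) (lam : ℝ) (hlam : 0 ≤ lam) (a : ℤ)
    (S : Set (ℝ × ℝ)) (hS : S = {P : ℝ × ℝ | P.1 = p₁ ∧ yp - lam ≤ P.2 ∧ P.2 ≤ yp})
    (ha : val (G (a, 1)) = (((a : ℝ) * p₁ + yp : ℝ) : WithTop ℝ))
    (hb : (0 : WithTop ℝ) ≤ val (G (0, 0)))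
    (hc : ∀ P ∈ S, ∀ i : ℤ × ℤ, i ≠ (0, 0) → i ≠ (a, 1) →
      tau val (⇑G) i P < max (tau val (⇑G) (0, 0) P) (tau val (⇑G) (a, 1) P)) :
    (∀ μ : ℝ, val (G (0, 0)) = (μ : WithTop ℝ) → μ ≤ lam →
      tropCurve val G ∩ S = {(p₁, yp - μ)}) ∧
    (((lam : ℝ) : WithTop ℝ) < val (G (0, 0)) → tropCurve val G ∩ S = ∅) := by
  subst hS
  have hne : ((0, 0) : ℤ × ℤ) ≠ (a, 1) := by simp [Prod.ext_iff]
  have htauA : ∀ P : ℝ × ℝ, P.1 = p₁ →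
      tau val (⇑G) (a, 1) P = ((P.2 - yp : ℝ) : EReal) := by
    intro P hP
    rw [tau, ha]
    rw [show wte ((((a : ℝ) * p₁ + yp : ℝ)) : WithTop ℝ) = (((a : ℝ) * p₁ + yp : ℝ) : EReal)
      from rfl, ← EReal.coe_neg, ← EReal.coe_add, EReal.coe_eq_coe_iff]
    simp [hP]
    ring
  have htauO : ∀ P : ℝ × ℝ, tau val (⇑G) (0, 0) P = -(wte (val (G (0, 0)))) := by
    intro P
    simp [tau]
  have hsup : ∀ P ∈ {P : ℝ × ℝ | P.1 = p₁ ∧ yp - lam ≤ P.2 ∧ P.2 ≤ yp},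
      (⨆ l : ℤ × ℤ, tau val (⇑G) l P) =
        max (tau val (⇑G) (0, 0) P) (tau val (⇑G) (a, 1) P) := by
    intro P hP
    apply le_antisymm
    · apply iSup_le
      intro l
      by_cases h0 : l = (0, 0)
      · subst h0; exact le_max_left _ _
      by_cases h1 : l = (a, 1)
      · subst h1; exact le_max_right _ _
      · exact (hc P hP l h0 h1).le
    · exact max_le (le_iSup (fun l : ℤ × ℤ => tau val (⇑G) l P) _)
        (le_iSup (fun l : ℤ × ℤ => tau val (⇑G) l P) _)
  have hchar : ∀ P ∈ {P : ℝ × ℝ | P.1 = p₁ ∧ yp - lam ≤ P.2 ∧ P.2 ≤ yp},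
      (P ∈ tropCurve val G ↔ tau val (⇑G) (0, 0) P = tau val (⇑G) (a, 1) P) := by
    intro P hP
    constructor
    · rintro ⟨i, j, hij, hi, hj⟩
      have key : ∀ l : ℤ × ℤ, tau val (⇑G) l P = (⨆ m : ℤ × ℤ, tau val (⇑G) m P) →
          l = (0, 0) ∨ l = (a, 1) := by
        intro l hl
        by_contra hcon
        push_neg at hcon
        have := hc P hP l hcon.1 hcon.2
        rw [hl, hsup P hP] at this
        exact lt_irrefl _ this
      rcases key i hi with rfl | rfl <;> rcases key j hj with rfl | rfl
      · exact absurd rfl hij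
      · rw [hi, ← hj]
      · rw [hj, ← hi]
      · exact absurd rfl hij
    · intro heq
      refine ⟨(0, 0), (a, 1), hne, ?_, ?_⟩ <;>
        rw [hsup P hP, heq, max_self]
  constructor
  · intro μ hμ hμlam
    have hμ0 : (0 : ℝ) ≤ μ := by
      rw [hμ] at hb
      exact_mod_cast hb
    have htauO' : ∀ P : ℝ × ℝ, tau val (⇑G) (0, 0) P = ((-μ : ℝ) : EReal) := by
      intro P
      rw [htauO P, hμ]
      simp [wte, ← EReal.coe_neg]
    ext P
    constructor
    · rintro ⟨hPt, hPS⟩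
      have heq := (hchar P hPS).1 hPt
      rw [htauO' P, htauA P hPS.1] at heq
      have : -μ = P.2 - yp := by exact_mod_cast heq
      have hP2 : P.2 = yp - μ := by linarith
      show P = (p₁, yp - μ)
      exact Prod.ext hPS.1 hP2
    · intro hP
      have hP' : P = (p₁, yp - μ) := hP
      subst hP'
      have hPS : ((p₁, yp - μ) : ℝ × ℝ) ∈
          {P : ℝ × ℝ | P.1 = p₁ ∧ yp - lam ≤ P.2 ∧ P.2 ≤ yp} := by
        refine ⟨rfl, ?_, ?_⟩ <;> simp <;> linarith
      refine ⟨(hchar _ hPS).2 ?_, hPS⟩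
      rw [htauO' _, htauA _ rfl]
      norm_num
  · intro hlt
    ext P
    simp only [Set.mem_inter_iff, Set.mem_empty_iff_false, iff_false]
    rintro ⟨hPt, hPS⟩
    have heq := (hchar P hPS).1 hPt
    rw [htauO P, htauA P hPS.1] at heq
    rcases eq_or_ne (val (G (0, 0))) ⊤ with htop | htop
    · rw [htop] at heq
      simp only [wte, WithTop.recTopCoe_top, EReal.neg_top] at heq
      exact EReal.coe_ne_bot _ heq.symm
    · obtain ⟨μ, hμ⟩ := WithTop.ne_top_iff_exists.1 htop
      rw [← hμ] at heq hlt
      have hlamμ : lam < μ := by exact_mod_cast hlt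
      have : -(wte (μ : WithTop ℝ)) = ((-μ : ℝ) : EReal) := by
        simp [wte, ← EReal.coe_neg]
      rw [this] at heq
      have h1 : -μ = P.2 - yp := by exact_mod_cast heq
      have h2 := hPS.2.1
      linarith
end

section
/- Let G ∈ k[x^{±1}, y^{±1}] be a nonzero Laurent polynomial with coefficient family (e_i)_{i∈ℤ²}, let p₁ ∈ ℝ and y₋ < y₊ be real numbers, set λ′ := (y₊ − y₋)/2, let a, c ∈ ℤ and set i₊ := (a, 1), i₋ := (c, −1). Let S := {(p₁, t) : y₋ ≤ t ≤ y₊}. Assume: (a) val(e_{i₊}) = a·p₁ + y₊ and val(e_{i₋}) = c·p₁ − y₋ (equivalently τ(G; i₊; (p₁,t)) = t − y₊ and τ(G; i₋; (p₁,t)) = y₋ − t for all t); (b) val(e_{(0,0)}) ≥ 0 (with val(0) = ∞); (c) for every P ∈ S and every i ∈ ℤ² with i ∉ {(0,0), i₊, i₋}, τ(G; i; P) < max{τ(G; (0,0); P), τ(G; i₊; P), τ(G; i₋; P)}. Then: if val(e_{(0,0)}) < λ′, the intersection V(trop(G)) ∩ S consists of exactly the two points (p₁, y₊ − val(e_{(0,0)}))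 and (p₁, y₋ + val(e_{(0,0)})); and if val(e_{(0,0)}) ≥ λ′ (including e_{(0,0)} = 0), then V(trop(G)) ∩ S consists of exactly the single midpoint (p₁, (y₊ + y₋)/2). -/
lemma wte_coe (r : ℝ) : wte (r : WithTop ℝ) = (r : EReal) := rfl

lemma wte_top : wte (⊤ : WithTop ℝ) = ⊤ := rfl

lemma neg_coe_add_coe (r s : ℝ) : -(r : EReal) + (s : EReal) = ((s - r : ℝ) : EReal) := by
  rw [sub_eq_add_neg, EReal.coe_add, EReal.coe_neg, add_comm]

lemma tau_eq {k : Type*} [Field k] (val : k → WithTop ℝ) (F : ℤ × ℤ → k)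
    (i : ℤ × ℤ) (P : ℝ × ℝ) (r : ℝ) (h : val (F i) = (r : WithTop ℝ)) :
    tau val F i P = (((i.1 : ℝ) * P.1 + (i.2 : ℝ) * P.2 - r : ℝ) : EReal) := by
  rw [tau, h, wte_coe, neg_coe_add_coe]

lemma tau_bot {k : Type*} [Field k] (val : k → WithTop ℝ) (F : ℤ × ℤ → k)
    (i : ℤ × ℤ) (P : ℝ × ℝ) (h : val (F i) = ⊤) :
    tau val F i P = ⊥ := by
  rw [tau, h, wte_top, EReal.neg_top, EReal.bot_add]

theorem stmt9 {k : Type*} [Field k] (val : k → WithTop ℝ)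
    (hval_mul : ∀ a b : k, val (a * b) = val a + val b)
    (hval_add : ∀ a b : k, min (val a) (val b) ≤ val (a + b))
    (hval_top : ∀ a : k, val a = ⊤ ↔ a = 0)
    (G : (ℤ × ℤ) →₀ k) (hG : G ≠ 0)
    (p₁ ym yp : ℝ) (hy : ym < yp) (lam' : ℝ) (hlam' : lam' = (yp - ym) / 2)
    (a c : ℤ)
    (S : Set (ℝ × ℝ)) (hS : S = {P : ℝ × ℝ | P.1 = p₁ ∧ ym ≤ P.2 ∧ P.2 ≤ yp})
    (hap : val (G (a, 1)) = (((a : ℝ) * p₁ + yp : ℝ) : WithTop ℝ))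
    (ham : val (G (c, -1)) = (((c : ℝ) * p₁ - ym : ℝ) : WithTop ℝ))
    (hb : (0 : WithTop ℝ) ≤ val (G (0, 0)))
    (hcc : ∀ P ∈ S, ∀ i : ℤ × ℤ, i ≠ (0, 0) → i ≠ (a, 1) → i ≠ (c, -1) →
      tau val (⇑G) i P <
        max (tau val (⇑G) (0, 0) P) (max (tau val (⇑G) (a, 1) P) (tau val (⇑G) (c, -1) P))) :
    (∀ μ : ℝ, val (G (0, 0)) = (μ : WithTop ℝ) → μ < lam' →
      tropCurve val G ∩ S = {(p₁, yp - μ), (p₁, ym + μ)}) ∧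
    (((lam' : ℝ) : WithTop ℝ) ≤ val (G (0, 0)) →
      tropCurve val G ∩ S = {(p₁, (yp + ym) / 2)}) := by
  subst hS hlam'
  have hne1 : ((0,0) : ℤ×ℤ) ≠ (a,1) := by simp [Prod.ext_iff]
  have hne2 : ((0,0) : ℤ×ℤ) ≠ (c,-1) := by simp [Prod.ext_iff]
  have hne3 : ((a,1) : ℤ×ℤ) ≠ (c,-1) := by simp [Prod.ext_iff]
  -- values of the three distinguished tau's on S
  have htp : ∀ P : ℝ × ℝ, P.1 = p₁ → tau val (⇑G) (a,1) P = ((P.2 - yp : ℝ) : EReal) := by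
    intro P h1
    rw [tau_eq val (⇑G) (a,1) P _ hap, h1]
    norm_num
  have htm : ∀ P : ℝ × ℝ, P.1 = p₁ → tau val (⇑G) (c,-1) P = ((ym - P.2 : ℝ) : EReal) := by
    intro P h1
    rw [tau_eq val (⇑G) (c,-1) P _ ham, h1]
    congr 1
    push_cast
    ring
  -- the key characterization of membership in the tropical curve, for P ∈ S
  have key : ∀ P : ℝ × ℝ, P.1 = p₁ → ym ≤ P.2 → P.2 ≤ yp →
      (P ∈ tropCurve val G ↔
        ((tau val (⇑G) (0,0) P = tau val (⇑G) (a,1) P ∧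
            tau val (⇑G) (c,-1) P ≤ tau val (⇑G) (a,1) P) ∨
         (tau val (⇑G) (0,0) P = tau val (⇑G) (c,-1) P ∧
            tau val (⇑G) (a,1) P ≤ tau val (⇑G) (c,-1) P) ∨
         (tau val (⇑G) (a,1) P = tau val (⇑G) (c,-1) P ∧
            tau val (⇑G) (0,0) P ≤ tau val (⇑G) (c,-1) P))) := by
    intro P h1 h2 h3
    have hPS : P ∈ {P : ℝ × ℝ | P.1 = p₁ ∧ ym ≤ P.2 ∧ P.2 ≤ yp} := ⟨h1, h2, h3⟩
    set t0 := tau val (⇑G) (0,0) P with ht0d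
    set tp := tau val (⇑G) (a,1) P with htpd
    set tm := tau val (⇑G) (c,-1) P with htmd
    have hsup : (⨆ l : ℤ × ℤ, tau val (⇑G) l P) = max t0 (max tp tm) := by
      apply le_antisymm
      · refine iSup_le fun i => ?_
        by_cases h0 : i = (0,0)
        · subst h0; exact le_max_left _ _
        by_cases hA : i = (a,1)
        · subst hA; exact le_trans (le_max_left _ _) (le_max_right _ _)
        by_cases hC : i = (c,-1)
        · subst hC; exact le_trans (le_max_right _ _) (le_max_right _ _)
        exact (hcc P hPS i h0 hA hC).le
      · exact max_le (le_iSup (fun l => tau val (⇑G) l P) (0,0))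
          (max_le (le_iSup (fun l => tau val (⇑G) l P) (a,1))
            (le_iSup (fun l => tau val (⇑G) l P) (c,-1)))
    constructor
    · rintro ⟨i, j, hij, hi, hj⟩
      rw [hsup] at hi hj
      have hmem : ∀ l : ℤ × ℤ, tau val (⇑G) l P = max t0 (max tp tm) →
          l = (0,0) ∨ l = (a,1) ∨ l = (c,-1) := by
        intro l hl
        by_contra hcon
        push_neg at hcon
        exact absurd hl (ne_of_lt (hcc P hPS l hcon.1 hcon.2.1 hcon.2.2))
      have hle_tp : tm ≤ max t0 (max tp tm) :=
        le_trans (le_max_right _ _) (le_max_right _ _)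
      have hle_tp' : tp ≤ max t0 (max tp tm) :=
        le_trans (le_max_left _ _) (le_max_right _ _)
      have hle_t0 : t0 ≤ max t0 (max tp tm) := le_max_left _ _
      rcases hmem i hi with rfl | rfl | rfl <;> rcases hmem j hj with rfl | rfl | rfl
      · exact absurd rfl hij
      · exact Or.inl ⟨hi.trans hj.symm, hle_tp.trans_eq hj.symm⟩
      · exact Or.inr (Or.inl ⟨hi.trans hj.symm, hle_tp'.trans_eq hj.symm⟩)
      · exact Or.inl ⟨hj.trans hi.symm, hle_tp.trans_eq hi.symm⟩
      · exact absurd rfl hij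
      · exact Or.inr (Or.inr ⟨hi.trans hj.symm, hle_t0.trans_eq hj.symm⟩)
      · exact Or.inr (Or.inl ⟨hj.trans hi.symm, hle_tp'.trans_eq hi.symm⟩)
      · exact Or.inr (Or.inr ⟨hj.trans hi.symm, hle_t0.trans_eq hi.symm⟩)
      · exact absurd rfl hij
    · rintro (⟨he, hle⟩ | ⟨he, hle⟩ | ⟨he, hle⟩)
      · have hM : max t0 (max tp tm) = tp := by rw [he, max_eq_left hle, max_self]
        exact ⟨(0,0), (a,1), hne1, by rw [hsup, hM]; exact he,
          by rw [hsup, hM]⟩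
      · have hM : max t0 (max tp tm) = tm := by rw [he, max_eq_right hle, max_self]
        exact ⟨(0,0), (c,-1), hne2, by rw [hsup, hM]; exact he,
          by rw [hsup, hM]⟩
      · have hM : max t0 (max tp tm) = tm := by
          rw [he, max_self, max_eq_right hle]
        exact ⟨(a,1), (c,-1), hne3, by rw [hsup, hM]; exact he,
          by rw [hsup, hM]⟩
  constructor
  · -- case μ < λ'
    intro μ hμ hmls
    have hμ0 : (0:ℝ) ≤ μ := by rw [hμ] at hb; exact_mod_cast hb
    have ht0 : ∀ P : ℝ × ℝ, tau val (⇑G) (0,0) P = ((-μ : ℝ) : EReal) := by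
      intro P
      rw [tau_eq val (⇑G) (0,0) P _ hμ]
      norm_num
    ext P
    simp only [Set.mem_inter_iff, Set.mem_setOf_eq, Set.mem_insert_iff,
      Set.mem_singleton_iff]
    constructor
    · rintro ⟨hPC, h1, h2, h3⟩
      have hk := (key P h1 h2 h3).mp hPC
      rw [ht0 P, htp P h1, htm P h1] at hk
      rcases hk with ⟨he, hle⟩ | ⟨he, hle⟩ | ⟨he, hle⟩
      · have he' : -μ = P.2 - yp := EReal.coe_eq_coe_iff.mp he
        exact Or.inl (Prod.ext h1 (show P.2 = yp - μ by linarith))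
      · have he' : -μ = ym - P.2 := EReal.coe_eq_coe_iff.mp he
        exact Or.inr (Prod.ext h1 (show P.2 = ym + μ by linarith))
      · have he' : P.2 - yp = ym - P.2 := EReal.coe_eq_coe_iff.mp he
        have hle' : -μ ≤ ym - P.2 := EReal.coe_le_coe_iff.mp hle
        exact absurd hmls (by linarith)
    · rintro (rfl | rfl)
      · refine ⟨?_, rfl, show ym ≤ yp - μ by linarith, show yp - μ ≤ yp by linarith⟩
        refine (key _ rfl (by simp; linarith) (by simp; linarith)).mpr ?_
        rw [ht0 _, htp _ rfl, htm _ rfl]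
        exact Or.inl ⟨by norm_num, EReal.coe_le_coe_iff.mpr (by simp; linarith)⟩
      · refine ⟨?_, rfl, show ym ≤ ym + μ by linarith, show ym + μ ≤ yp by linarith⟩
        refine (key _ rfl (by simp; linarith) (by simp; linarith)).mpr ?_
        rw [ht0 _, htp _ rfl, htm _ rfl]
        exact Or.inr (Or.inl ⟨by norm_num, EReal.coe_le_coe_iff.mpr (by simp; linarith)⟩)
  · -- case λ' ≤ val(e₀₀)
    intro hlb
    by_cases htop : val (G (0,0)) = ⊤
    · have ht0 : ∀ P : ℝ × ℝ, tau val (⇑G) (0,0) P = ⊥ := fun P =>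
        tau_bot val (⇑G) (0,0) P htop
      ext P
      simp only [Set.mem_inter_iff, Set.mem_setOf_eq, Set.mem_singleton_iff]
      constructor
      · rintro ⟨hPC, h1, h2, h3⟩
        have hk := (key P h1 h2 h3).mp hPC
        rw [ht0 P, htp P h1, htm P h1] at hk
        rcases hk with ⟨he, hle⟩ | ⟨he, hle⟩ | ⟨he, hle⟩
        · exact absurd he.symm (EReal.coe_ne_bot _)
        · exact absurd he.symm (EReal.coe_ne_bot _)
        · have he' : P.2 - yp = ym - P.2 := EReal.coe_eq_coe_iff.mp he
          exact Prod.ext h1 (show P.2 = (yp + ym) / 2 by linarith)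
      · rintro rfl
        refine ⟨?_, rfl, show ym ≤ (yp + ym) / 2 by linarith,
          show (yp + ym) / 2 ≤ yp by linarith⟩
        refine (key _ rfl (show ym ≤ (yp + ym) / 2 by linarith)
          (show (yp + ym) / 2 ≤ yp by linarith)).mpr ?_
        rw [ht0 _, htp _ rfl, htm _ rfl]
        exact Or.inr (Or.inr ⟨EReal.coe_eq_coe_iff.mpr (by ring), bot_le⟩)
    · obtain ⟨μ, hμ''⟩ := Option.ne_none_iff_exists'.mp htop
      have hμ' : val (G (0,0)) = ((μ : ℝ) : WithTop ℝ) := hμ''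
      have hμ0 : (0:ℝ) ≤ μ := by rw [hμ'] at hb; exact_mod_cast hb
      have hlmu : (yp - ym) / 2 ≤ μ := by rw [hμ'] at hlb; exact_mod_cast hlb
      have ht0 : ∀ P : ℝ × ℝ, tau val (⇑G) (0,0) P = ((-μ : ℝ) : EReal) := by
        intro P
        rw [tau_eq val (⇑G) (0,0) P _ hμ']
        norm_num
      ext P
      simp only [Set.mem_inter_iff, Set.mem_setOf_eq, Set.mem_singleton_iff]
      constructor
      · rintro ⟨hPC, h1, h2, h3⟩
        have hk := (key P h1 h2 h3).mp hPC
        rw [ht0 P, htp P h1, htm P h1] at hk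
        rcases hk with ⟨he, hle⟩ | ⟨he, hle⟩ | ⟨he, hle⟩
        · have he' : -μ = P.2 - yp := EReal.coe_eq_coe_iff.mp he
          have hle' : ym - P.2 ≤ P.2 - yp := EReal.coe_le_coe_iff.mp hle
          exact Prod.ext h1 (show P.2 = (yp + ym) / 2 by linarith)
        · have he' : -μ = ym - P.2 := EReal.coe_eq_coe_iff.mp he
          have hle' : P.2 - yp ≤ ym - P.2 := EReal.coe_le_coe_iff.mp hle
          exact Prod.ext h1 (show P.2 = (yp + ym) / 2 by linarith)
        · have he' : P.2 - yp = ym - P.2 := EReal.coe_eq_coe_iff.mp he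
          exact Prod.ext h1 (show P.2 = (yp + ym) / 2 by linarith)
      · rintro rfl
        refine ⟨?_, rfl, show ym ≤ (yp + ym) / 2 by linarith,
          show (yp + ym) / 2 ≤ yp by linarith⟩
        refine (key _ rfl (show ym ≤ (yp + ym) / 2 by linarith)
          (show (yp + ym) / 2 ≤ yp by linarith)).mpr ?_
        rw [ht0 _, htp _ rfl, htm _ rfl]
        exact Or.inr (Or.inr ⟨EReal.coe_eq_coe_iff.mpr (by ring),
          EReal.coe_le_coe_iff.mpr (by show -μ ≤ ym - (yp + ym) / 2; linarith)⟩)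
end

section
/- Let ℓ > 0 and let ψ : [0, ℓ] → ℝ be a continuous function with ψ(0) = ψ(ℓ) = 0, for which there exist 0 = t₀ < t₁ < ⋯ < t_m = ℓ and integers s₁, …, s_m such that ψ is affine with slope s_k on [t_{k−1}, t_k] for each k. Assume s₁ ≤ 1, s_m ≥ −1, and s_k ≥ s_{k+1} for every 1 ≤ k ≤ m−1. Define the divisor D : [0, ℓ] → ℤ by D(0) := 1 − s₁, D(ℓ) := 1 + s_m, D(t_k) := s_k − s_{k+1} for 1 ≤ k ≤ m−1, and D(t) := 0 at all other points. Then there exist P₁, P₂ ∈ [0, ℓ] with P₁ ≤ P₂ and P₁ + P₂ = ℓ such that D is supported on {P₁, P₂} with D(P₁) = D(P₂) = 1 if P₁ < P₂, and D(P₁) = 2 if P₁ = P₂. -/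
theorem stmt10 (l : ℝ) (hl : 0 < l) (ψ : ℝ → ℝ)
    (hcont : ContinuousOn ψ (Set.Icc 0 l))
    (hψ0 : ψ 0 = 0) (hψl : ψ l = 0)
    (m : ℕ) (hm : 1 ≤ m) (t : ℕ → ℝ) (s : ℕ → ℤ)
    (ht0 : t 0 = 0) (htm : t m = l)
    (hmono : ∀ i < m, t i < t (i + 1))
    (haff : ∀ i, 1 ≤ i → i ≤ m → ∀ x ∈ Set.Icc (t (i - 1)) (t i),
      ψ x = ψ (t (i - 1)) + (s i : ℝ) * (x - t (i - 1)))
    (hs1 : s 1 ≤ 1) (hsm : -1 ≤ s m)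
    (hconc : ∀ i, 1 ≤ i → i ≤ m - 1 → s (i + 1) ≤ s i)
    (D : ℝ → ℤ)
    (hD0 : D 0 = 1 - s 1) (hDl : D l = 1 + s m)
    (hDint : ∀ i, 1 ≤ i → i ≤ m - 1 → D (t i) = s i - s (i + 1))
    (hDother : ∀ x : ℝ, (∀ i ≤ m, x ≠ t i) → D x = 0) :
    ∃ P₁ P₂ : ℝ, P₁ ∈ Set.Icc 0 l ∧ P₂ ∈ Set.Icc 0 l ∧ P₁ ≤ P₂ ∧ P₁ + P₂ = l ∧
      (∀ x : ℝ, D x ≠ 0 → x = P₁ ∨ x = P₂) ∧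
      (P₁ < P₂ → D P₁ = 1 ∧ D P₂ = 1) ∧
      (P₁ = P₂ → D P₁ = 2) := by
  classical
  -- monotonicity of t
  have tmono : ∀ a b : ℕ, a ≤ b → b ≤ m → t a ≤ t b := by
    intro a b hab hbm
    induction b with
    | zero =>
      have : a = 0 := Nat.le_zero.mp hab
      simp [this]
    | succ n ih =>
      rcases Nat.lt_or_ge a (n + 1) with h | h
      · have h1 := ih (Nat.lt_succ_iff.mp h) (by omega)
        have h2 := hmono n (by omega)
        linarith
      · have : a = n + 1 := le_antisymm hab h
        simp [this]
  have tsmono : ∀ a b : ℕ, a < b → b ≤ m → t a < t b := by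
    intro a b hab hbm
    obtain ⟨c, rfl⟩ : ∃ c, b = c + 1 := ⟨b - 1, by omega⟩
    have h1 := tmono a c (by omega) (by omega)
    have h2 := hmono c (by omega)
    linarith
  -- s is (weakly) decreasing
  have sdec : ∀ a b : ℕ, 1 ≤ a → a ≤ b → b ≤ m → s b ≤ s a := by
    intro a b ha hab hbm
    induction b with
    | zero => omega
    | succ n ih =>
      rcases Nat.lt_or_ge a (n + 1) with h | h
      · have h1 := ih (by omega) (by omega)
        have h2 := hconc n (by omega) (by omega)
        omega
      · have : a = n + 1 := by omega
        simp [this]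
  have sub : ∀ i : ℕ, 1 ≤ i → i ≤ m → s i ≤ 1 := fun i h1 h2 =>
    le_trans (sdec 1 i le_rfl h1 h2) hs1
  have slb : ∀ i : ℕ, 1 ≤ i → i ≤ m → -1 ≤ s i := fun i h1 h2 =>
    le_trans hsm (sdec i m h1 h2 le_rfl)
  set j := Nat.findGreatest (fun i => 1 ≤ i ∧ s i = 1) m with hjdef
  set k := Nat.findGreatest (fun i => 1 ≤ i ∧ 0 ≤ s i) m with hkdef
  have hjm : j ≤ m := Nat.findGreatest_le m
  have hkm : k ≤ m := Nat.findGreatest_le m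
  have hsj : 1 ≤ j → s j = 1 := by
    intro h
    exact (Nat.findGreatest_of_ne_zero hjdef.symm (by omega)).2
  have hsk : 1 ≤ k → 0 ≤ s k := by
    intro h
    exact (Nat.findGreatest_of_ne_zero hkdef.symm (by omega)).2
  have hjk : j ≤ k := by
    rcases Nat.eq_zero_or_pos j with h | h
    · omega
    · exact Nat.le_findGreatest hjm ⟨h, by rw [hsj h]; norm_num⟩
  -- slope values in the three regions
  have s1eq : ∀ i : ℕ, 1 ≤ i → i ≤ j → s i = 1 := by
    intro i h1 h2
    have hj1 : 1 ≤ j := le_trans h1 h2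
    have := sdec i j h1 h2 hjm
    have := sub i h1 (le_trans h2 hjm)
    rw [hsj hj1] at *
    omega
  have snot1 : ∀ i : ℕ, j < i → i ≤ m → s i ≤ 0 := by
    intro i h1 h2
    by_contra h
    push_neg at h
    have heq : s i = 1 := le_antisymm (sub i (by omega) h2) h
    have := Nat.le_findGreatest h2 (P := fun i => 1 ≤ i ∧ s i = 1) ⟨by omega, heq⟩
    omega
  have s0eq : ∀ i : ℕ, j < i → i ≤ k → s i = 0 := by
    intro i h1 h2
    have h3 := snot1 i h1 (le_trans h2 hkm)
    have h4 := sdec i k (by omega) h2 hkm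
    have h5 := hsk (by omega)
    omega
  have sneg : ∀ i : ℕ, k < i → i ≤ m → s i = -1 := by
    intro i h1 h2
    have h3 := slb i (by omega) h2
    by_contra h
    have hge : 0 ≤ s i := by omega
    have := Nat.le_findGreatest h2 (P := fun i => 1 ≤ i ∧ 0 ≤ s i) ⟨by omega, hge⟩
    omega
  -- recursion for ψ at the nodes
  have hrec : ∀ i : ℕ, 1 ≤ i → i ≤ m →
      ψ (t i) = ψ (t (i - 1)) + (s i : ℝ) * (t i - t (i - 1)) := by
    intro i h1 h2
    exact haff i h1 h2 (t i) ⟨tmono (i - 1) i (by omega) h2, le_refl _⟩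
  have hA : ∀ i, i ≤ j → ψ (t i) = t i := by
    intro i hi
    induction i with
    | zero => rw [ht0, hψ0]
    | succ n ih =>
      have h1 := hrec (n + 1) (by omega) (by omega)
      simp only [Nat.add_sub_cancel] at h1
      rw [ih (by omega), s1eq (n + 1) (by omega) hi] at h1
      rw [h1]; push_cast; ring
  have hB : ∀ i, j ≤ i → i ≤ k → ψ (t i) = t j := by
    intro i hji hik
    induction i, hji using Nat.le_induction with
    | base => exact hA j le_rfl
    | succ n hn ih =>
      have h1 := hrec (n + 1) (by omega) (by omega)
      simp only [Nat.add_sub_cancel] at h1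
      rw [ih (by omega), s0eq (n + 1) (by omega) hik] at h1
      rw [h1]; push_cast; ring
  have hC : ∀ i, k ≤ i → i ≤ m → ψ (t i) = t j - (t i - t k) := by
    intro i hki him
    induction i, hki using Nat.le_induction with
    | base => rw [hB k hjk le_rfl]; ring
    | succ n hn ih =>
      have h1 := hrec (n + 1) (by omega) (by omega)
      simp only [Nat.add_sub_cancel] at h1
      rw [ih (by omega), sneg (n + 1) (by omega) him] at h1
      rw [h1]; push_cast; ring
  have heql : t j + t k = l := by
    have := hC m hkm le_rfl
    rw [htm, hψl] at this
    linarith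
  refine ⟨t j, t k, ⟨?_, ?_⟩, ⟨?_, ?_⟩, tmono j k hjk hkm, heql, ?_, ?_, ?_⟩
  · rw [← ht0]; exact tmono 0 j (Nat.zero_le _) hjm
  · rw [← htm]; exact tmono j m hjm le_rfl
  · rw [← ht0]; exact tmono 0 k (Nat.zero_le _) hkm
  · rw [← htm]; exact tmono k m hkm le_rfl
  -- support
  · intro x hx
    by_contra hcon
    push_neg at hcon
    obtain ⟨hx1, hx2⟩ := hcon
    by_cases hxi : ∀ i ≤ m, x ≠ t i
    · exact hx (hDother x hxi)
    push_neg at hxi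
    obtain ⟨i, him, rfl⟩ := hxi
    apply hx
    have hij : i ≠ j := by rintro rfl; exact hx1 rfl
    have hik2 : i ≠ k := by rintro rfl; exact hx2 rfl
    rcases Nat.eq_zero_or_pos i with rfl | hi1
    · have hj1 : 1 ≤ j := by omega
      have := s1eq 1 le_rfl hj1
      rw [ht0, hD0]
      omega
    by_cases hi : i = m
    · have hkm' : k < m := by omega
      have := sneg m (by omega) le_rfl
      rw [hi, htm, hDl]
      omega
    · rw [hDint i hi1 (by omega)]
      rcases lt_trichotomy i j with h | h | h
      · rw [s1eq i hi1 (by omega), s1eq (i + 1) (by omega) (by omega)]; ring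
      · omega
      · rcases Nat.lt_or_ge i k with h2 | h2
        · rw [s0eq i h (by omega), s0eq (i + 1) (by omega) (by omega)]; ring
        · have h3 : k < i := lt_of_le_of_ne h2 (Ne.symm hik2)
          rw [sneg i h3 (by omega), sneg (i + 1) (by omega) (by omega)]; ring
  · intro hlt
    have hjk2 : j < k := by
      rcases eq_or_lt_of_le hjk with h | h
      · rw [h] at hlt; exact absurd hlt (lt_irrefl _)
      · exact h
    constructor
    · rcases Nat.eq_zero_or_pos j with hj0 | hj1
      · have hs10 := s0eq 1 (by omega) (by omega)
        rw [hj0, ht0, hD0]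
        omega
      · rw [hDint j hj1 (by omega), s1eq j hj1 le_rfl,
          s0eq (j + 1) (by omega) (by omega)]
        ring
    · rcases eq_or_lt_of_le hkm with hk | hk
      · have h0 := s0eq k hjk2 le_rfl
        rw [hk] at h0
        rw [hk, htm, hDl]
        omega
      · rw [hDint k (by omega) (by omega), s0eq k hjk2 le_rfl,
          sneg (k + 1) (by omega) (by omega)]
        ring
  · intro heq2
    have hjk2 : j = k := by
      rcases eq_or_lt_of_le hjk with h | h
      · exact h
      · exact absurd heq2 (ne_of_lt (tsmono j k h hkm))
    have hj1 : 1 ≤ j := by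
      by_contra h
      have hj0 : j = 0 := by omega
      have hk0 : k = 0 := by omega
      rw [hj0, hk0, ht0] at heql
      linarith
    have hjm1 : j < m := by
      by_contra h
      have hjm' : j = m := by omega
      have hkm' : k = m := by omega
      rw [hjm', hkm', htm] at heql
      linarith
    rw [hDint j hj1 (by omega), s1eq j hj1 le_rfl,
      sneg (j + 1) (by omega) (by omega)]
    ring
end

section
/- Let g ∈ k[x^{±1}, y^{±1}] be a Laurent polynomial, let b ∈ ℤ, let a₁, a₂ ∈ ℤ with a₁ ≠ a₂, and let P₁, P₂ ∈ ℝ² be points with the same first coordinate (i.e. P₁ − P₂ is a scalar multiple of (0,1)). Then it is impossible that both of the following hold: (1) τ(g; (a₁,b); P₁) = τ(g; (a₁+1,b); P₁) and τ(g; (a₁,b); P₁) > τ(g; (i,j); P₁) for every (i,j) ∈ ℤ² ∖ {(a₁,b), (a₁+1,b)}; and (2) τ(g; (a₂,b); P₂) = τ(g; (a₂+1,b); P₂) and τ(g; (a₂,b); P₂) > τ(g; (i,j); P₂) for every (i,j) ∈ ℤ² ∖ {(a₂,b), (a₂+1,b)}. -/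
theorem stmt11 {k : Type*} [Field k] (val : k → WithTop ℝ)
    (hval_mul : ∀ a b : k, val (a * b) = val a + val b)
    (hval_add : ∀ a b : k, min (val a) (val b) ≤ val (a + b))
    (hval_top : ∀ a : k, val a = ⊤ ↔ a = 0)
    (g : (ℤ × ℤ) →₀ k) (b a₁ a₂ : ℤ) (ha : a₁ ≠ a₂)
    (P₁ P₂ : ℝ × ℝ) (hP : P₁.1 = P₂.1) :
    ¬ ((tau val (⇑g) (a₁, b) P₁ = tau val (⇑g) (a₁ + 1, b) P₁ ∧
          ∀ i : ℤ × ℤ, i ≠ (a₁, b) → i ≠ (a₁ + 1, b) →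
            tau val (⇑g) i P₁ < tau val (⇑g) (a₁, b) P₁) ∧
       (tau val (⇑g) (a₂, b) P₂ = tau val (⇑g) (a₂ + 1, b) P₂ ∧
          ∀ i : ℤ × ℤ, i ≠ (a₂, b) → i ≠ (a₂ + 1, b) →
            tau val (⇑g) i P₂ < tau val (⇑g) (a₂, b) P₂)) := by
  rintro ⟨⟨he1, hs1⟩, he2, hs2⟩
  set r : ℝ := (b : ℝ) * (P₂.2 - P₁.2) with hr
  have shift : ∀ c : ℤ, tau val (⇑g) (c, b) P₂ = tau val (⇑g) (c, b) P₁ + (r : EReal) := by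
    intro c
    unfold tau
    rw [add_assoc]
    congr 1
    rw [← EReal.coe_add]
    congr 1
    simp only [hr, ← hP]
    ring
  have he1' : tau val (⇑g) (a₁, b) P₂ = tau val (⇑g) (a₁ + 1, b) P₂ := by
    rw [shift, shift, he1]
  have hs1' : ∀ c : ℤ, c ≠ a₁ → c ≠ a₁ + 1 →
      tau val (⇑g) (c, b) P₂ < tau val (⇑g) (a₁, b) P₂ := by
    intro c h1 h2
    rw [shift, shift]
    exact EReal.add_lt_add_right_coe (hs1 (c, b) (by simpa using h1) (by simpa using h2)) r
  by_cases h21 : a₂ = a₁ + 1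
  · -- segments share endpoint: τ(a₁)=τ(a₂) at P₂, but hs2 gives τ(a₁)<τ(a₂)
    have heq : tau val (⇑g) (a₁, b) P₂ = tau val (⇑g) (a₂, b) P₂ := by rw [h21]; exact he1'
    have hlt : tau val (⇑g) (a₁, b) P₂ < tau val (⇑g) (a₂, b) P₂ :=
      hs2 (a₁, b) (by simpa using ha) (by simp [h21]; omega)
    exact absurd heq (ne_of_lt hlt)
  · have hlt1 : tau val (⇑g) (a₂, b) P₂ < tau val (⇑g) (a₁, b) P₂ :=
      hs1' a₂ (Ne.symm ha) h21
    by_cases h12 : a₁ = a₂ + 1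
    · have heq : tau val (⇑g) (a₂, b) P₂ = tau val (⇑g) (a₁, b) P₂ := by rw [h12]; exact he2
      exact absurd heq (ne_of_lt hlt1)
    · have hlt2 : tau val (⇑g) (a₁, b) P₂ < tau val (⇑g) (a₂, b) P₂ :=
        hs2 (a₁, b) (by simpa using ha) (by simpa using h12)
      exact absurd hlt1 (not_lt_of_gt hlt2)
end

section
/- Let λ ≥ 0 and let f, g ∈ k[x^{±1}, y^{±1}] be Laurent polynomials with coefficient families (c_i) and (d_i) satisfying: val(c_{(0,0)}) = val(d_{(0,0)}) = 0; val(c_{(1,0)}) = val(d_{(1,0)}) ≠ ∞; and for every n ∈ ℤ∖{0,1}, val(c_{(n,0)}) > n·val(c_{(1,0)}) and val(d_{(n,0)}) > n·val(d_{(1,0)}) (with val(0) = ∞). Then there exists a Laurent polynomial q ∈ k[x^{±1}, y^{±1}] such that the Laurent polynomial G := g + q·f satisfies: the coefficient of G at (1,0) is 0; val(G_{(0,0)}) ≥ 0; and for every n ∈ ℤ with n ≠ 0, val(G_{(n,0)}) > n·val(c_{(1,0)}) + λ. -/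
namespace Stmt12Aux

variable {k : Type*} [Field k]

/-- weight function for the termination measure -/
def phi (n : ℤ) : ℕ := if 0 ≤ n then n.toNat else (1 - n).toNat

lemma phi_pos {n : ℤ} (hn : n ≠ 0) : 0 < phi n := by
  unfold phi; split_ifs <;> omega

lemma phi_carry {n₀ : ℤ} (hn : n₀ ≠ 0) :
    phi (if 0 < n₀ then n₀ - 1 else n₀ + 1) < phi n₀ := by
  unfold phi; split_ifs <;> omega

section Val

variable (val : k → WithTop ℝ)
  (hval_mul : ∀ a b : k, val (a * b) = val a + val b)
  (hval_add : ∀ a b : k, min (val a) (val b) ≤ val (a + b))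
  (hval_top : ∀ a : k, val a = ⊤ ↔ a = 0)

include hval_mul hval_top in
lemma val_one : val 1 = ((0 : ℝ) : WithTop ℝ) := by
  have h := hval_mul 1 1
  rw [one_mul] at h
  have hne : val (1 : k) ≠ ⊤ := fun H => one_ne_zero ((hval_top 1).1 H)
  obtain ⟨r, hr⟩ := WithTop.ne_top_iff_exists.1 hne
  rw [← hr, ← WithTop.coe_add] at h
  have : r = r + r := WithTop.coe_inj.1 h
  have : r = 0 := by linarith
  rw [← hr, this]

include hval_mul hval_top in
lemma val_negOne : val (-1 : k) = ((0 : ℝ) : WithTop ℝ) := by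
  have h := hval_mul (-1) (-1)
  rw [neg_mul_neg, one_mul, val_one val hval_mul hval_top] at h
  have hne : val (-1 : k) ≠ ⊤ := by
    intro H
    rw [H] at h
    simp at h
  obtain ⟨r, hr⟩ := WithTop.ne_top_iff_exists.1 hne
  rw [← hr, ← WithTop.coe_add] at h
  have : (0 : ℝ) = r + r := WithTop.coe_inj.1 h
  have : r = 0 := by linarith
  rw [← hr, this]

include hval_mul hval_top in
lemma val_neg (x : k) : val (-x) = val x := by
  rw [show -x = -1 * x by ring, hval_mul, val_negOne val hval_mul hval_top]
  simp

include hval_mul hval_top in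
lemma val_inv {y : k} {r : ℝ} (hy : val y = (r : WithTop ℝ)) :
    val y⁻¹ = ((-r : ℝ) : WithTop ℝ) := by
  have hy0 : y ≠ 0 := by
    intro H
    rw [H, (hval_top 0).2 rfl] at hy
    exact (WithTop.coe_ne_top (a := r)) hy.symm
  have h := hval_mul y y⁻¹
  rw [mul_inv_cancel₀ hy0, val_one val hval_mul hval_top, hy] at h
  have hne : val y⁻¹ ≠ ⊤ := by
    intro H
    rw [H] at h
    simp at h
  obtain ⟨s, hs⟩ := WithTop.ne_top_iff_exists.1 hne
  rw [← hs, ← WithTop.coe_add] at h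
  have : (0 : ℝ) = r + s := WithTop.coe_inj.1 h
  have : s = -r := by linarith
  rw [← hs, this]

include hval_add in
lemma le_val_add {a b : k} {w : WithTop ℝ} (ha : w ≤ val a) (hb : w ≤ val b) :
    w ≤ val (a + b) :=
  le_trans (le_min ha hb) (hval_add a b)

include hval_mul in
lemma le_val_mul {a b : k} {r s : ℝ} (ha : (r : WithTop ℝ) ≤ val a)
    (hb : (s : WithTop ℝ) ≤ val b) : ((r + s : ℝ) : WithTop ℝ) ≤ val (a * b) := by
  rw [hval_mul, WithTop.coe_add]
  exact add_le_add ha hb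

include hval_mul hval_top in
lemma val_neg_div {x y : k} {q r : ℝ} (hx : (q : WithTop ℝ) ≤ val x)
    (hy : val y = (r : WithTop ℝ)) :
    ((q - r : ℝ) : WithTop ℝ) ≤ val (-(x / y)) := by
  rw [val_neg val hval_mul hval_top, div_eq_mul_inv]
  have := le_val_mul val hval_mul hx (le_of_eq (val_inv val hval_mul hval_top hy).symm)
  simpa [sub_eq_add_neg] using this

end Val

/-- finite family of strict inequalities admits a uniform positive gap -/
lemma exists_eps {ι : Type*} (S : Finset ι) (x : ι → ℝ) (v : ι → WithTop ℝ)
    (h : ∀ i ∈ S, (x i : WithTop ℝ) < v i) :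
    ∃ ε : ℝ, 0 < ε ∧ ∀ i ∈ S, ((x i + ε : ℝ) : WithTop ℝ) ≤ v i := by
  classical
  induction S using Finset.induction with
  | empty => exact ⟨1, one_pos, fun i hi => absurd hi (Finset.notMem_empty i)⟩
  | @insert a S ha IH =>
    · obtain ⟨ε, hε, hS⟩ := IH (fun i hi => h i (Finset.mem_insert_of_mem hi))
      have hav := h _ (Finset.mem_insert_self a S)
      rcases eq_or_ne (v a) ⊤ with hv | hv
      · refine ⟨ε, hε, fun i hi => ?_⟩
        rcases Finset.mem_insert.1 hi with rfl | hi
        · rw [hv]; exact le_top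
        · exact hS i hi
      · obtain ⟨y, hy⟩ := WithTop.ne_top_iff_exists.1 hv
        have hxy : x a < y := by
          rw [← hy] at hav
          exact_mod_cast hav
        refine ⟨min ε (y - x a), lt_min hε (by linarith), fun i hi => ?_⟩
        rcases Finset.mem_insert.1 hi with rfl | hi
        · rw [← hy]
          have : x i + min ε (y - x i) ≤ y := by
            have := min_le_right ε (y - x i); linarith
          exact_mod_cast this
        · refine le_trans ?_ (hS i hi)
          have : x i + min ε (y - x a) ≤ x i + ε := by
            have := min_le_left ε (y - x a); linarith
          exact_mod_cast this


section Conv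

variable {k : Type*} [Field k]

/-- `t * x^m * A` as a coefficient family -/
noncomputable def shiftA (A : ℤ →₀ k) (m : ℤ) (t : k) : ℤ →₀ k :=
  Finsupp.mapDomain (· + m) (t • A)

lemma shiftA_apply (A : ℤ →₀ k) (m : ℤ) (t : k) (n : ℤ) :
    shiftA A m t n = t * A (n - m) := by
  have hinj : Function.Injective (· + m : ℤ → ℤ) := add_left_injective m
  have : shiftA A m t ((n - m) + m) = (t • A) (n - m) :=
    Finsupp.mapDomain_apply hinj (t • A) (n - m)
  rw [sub_add_cancel] at this
  rw [this, Finsupp.smul_apply, smul_eq_mul]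

lemma shiftA_zero (A : ℤ →₀ k) (m : ℤ) : shiftA A m 0 = 0 := by
  unfold shiftA
  rw [zero_smul, Finsupp.mapDomain_zero]

lemma shiftA_add (A : ℤ →₀ k) (m : ℤ) (t₁ t₂ : k) :
    shiftA A m (t₁ + t₂) = shiftA A m t₁ + shiftA A m t₂ := by
  unfold shiftA
  rw [add_smul, Finsupp.mapDomain_add]

/-- `Q * A` as a coefficient family -/
noncomputable def convA (A Q : ℤ →₀ k) : ℤ →₀ k := Q.sum fun m t => shiftA A m t

lemma convA_zero (A : ℤ →₀ k) : convA A 0 = 0 := Finsupp.sum_zero_index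

lemma convA_single (A : ℤ →₀ k) (m : ℤ) (t : k) :
    convA A (Finsupp.single m t) = shiftA A m t :=
  Finsupp.sum_single_index (shiftA_zero A m)

lemma convA_add (A Q₁ Q₂ : ℤ →₀ k) : convA A (Q₁ + Q₂) = convA A Q₁ + convA A Q₂ := by
  classical
  exact Finsupp.sum_add_index (fun m _ => shiftA_zero A m) (fun m _ => shiftA_add A m)

lemma convA_apply (A Q : ℤ →₀ k) (n : ℤ) :
    convA A Q n = Q.sum fun m t => t * A (n - m) := by
  rw [convA, Finsupp.sum_apply]
  exact Finset.sum_congr rfl fun m _ => shiftA_apply A m _ n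

end Conv


section Step

variable {k : Type*} [Field k]

lemma step
    (val : k → WithTop ℝ)
    (hval_mul : ∀ a b : k, val (a * b) = val a + val b)
    (hval_add : ∀ a b : k, min (val a) (val b) ≤ val (a + b))
    (hval_top : ∀ a : k, val a = ⊤ ↔ a = 0)
    (A : ℤ →₀ k) (p₁ μ : ℝ) (hμ : 0 < μ)
    (hA0 : val (A 0) = ((0 : ℝ) : WithTop ℝ))
    (hA1 : val (A 1) = ((p₁ : ℝ) : WithTop ℝ))
    (hAs : ∀ s : ℤ, s ≠ 0 → s ≠ 1 → (((s : ℝ) * p₁ + μ : ℝ) : WithTop ℝ) ≤ val (A s))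
    (c : ℝ) (hc : 0 < c)
    (h : ℤ →₀ k)
    (hinv0 : (0 : WithTop ℝ) ≤ val (h 0))
    (hinv : ∀ n : ℤ, n ≠ 0 → (((n : ℝ) * p₁ + c : ℝ) : WithTop ℝ) ≤ val (h n))
    (n₀ : ℤ) (hn₀ : n₀ ≠ 0)
    (j : ℤ) (hj : val (A j) = (((j : ℝ) * p₁ : ℝ) : WithTop ℝ)) :
    ∃ t : k,
      (h + shiftA A (n₀ - j) t) n₀ = 0 ∧
      (0 : WithTop ℝ) ≤ val ((h + shiftA A (n₀ - j) t) 0) ∧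
      (∀ n : ℤ, n ≠ 0 →
        (((n : ℝ) * p₁ + c : ℝ) : WithTop ℝ) ≤ val ((h + shiftA A (n₀ - j) t) n)) ∧
      (∀ n : ℤ, n ≠ n₀ - j → n ≠ n₀ - j + 1 →
        min (val (h n)) ((((n : ℝ) * p₁ + c + μ : ℝ)) : WithTop ℝ) ≤
          val ((h + shiftA A (n₀ - j) t) n)) := by
  have hAj : A j ≠ 0 := by
    intro H
    rw [H, (hval_top 0).2 rfl] at hj
    exact (WithTop.coe_ne_top (a := (j : ℝ) * p₁)) hj.symm
  set t : k := -(h n₀ / A j) with ht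
  have hvt : (((n₀ : ℝ) * p₁ + c - (j : ℝ) * p₁ : ℝ) : WithTop ℝ) ≤ val t :=
    val_neg_div val hval_mul hval_top (hinv n₀ hn₀) hj
  have hcancel : ∀ n : ℤ, n = n₀ → h n + t * A (n - (n₀ - j)) = 0 := by
    intro n hn
    subst hn
    have hji : n - (n - j) = j := by ring
    rw [hji, ht]
    field_simp
    ring
  have key : ∀ n : ℤ, (((n : ℝ) * p₁ + c : ℝ) : WithTop ℝ) ≤ val (t * A (n - (n₀ - j))) ∧
      (n ≠ n₀ - j → n ≠ n₀ - j + 1 →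
        (((n : ℝ) * p₁ + c + μ : ℝ) : WithTop ℝ) ≤ val (t * A (n - (n₀ - j)))) := by
    intro n
    rcases eq_or_ne (n - (n₀ - j)) 0 with h0 | h0
    · have hn' : n = n₀ - j := by omega
      subst hn'
      rw [h0]
      refine ⟨?_, fun hne _ => absurd rfl hne⟩
      refine le_trans (le_of_eq ?_) (le_val_mul val hval_mul hvt (le_of_eq hA0.symm))
      rw [WithTop.coe_inj]; push_cast; ring
    rcases eq_or_ne (n - (n₀ - j)) 1 with h1 | h1
    · have hn' : n = n₀ - j + 1 := by omega
      subst hn'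
      rw [h1]
      refine ⟨?_, fun _ hne => absurd rfl hne⟩
      refine le_trans (le_of_eq ?_) (le_val_mul val hval_mul hvt (le_of_eq hA1.symm))
      rw [WithTop.coe_inj]; push_cast; ring
    · have hmul := le_val_mul val hval_mul hvt (hAs _ h0 h1)
      constructor
      · refine le_trans (WithTop.coe_le_coe.2 ?_) hmul
        push_cast
        nlinarith [hμ.le]
      · intro _ _
        refine le_trans (le_of_eq ?_) hmul
        rw [WithTop.coe_inj]; push_cast; ring
  refine ⟨t, ?_, ?_, ?_, ?_⟩
  · rw [Finsupp.add_apply, shiftA_apply]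
    exact hcancel n₀ rfl
  · rw [Finsupp.add_apply, shiftA_apply]
    refine le_val_add val hval_add hinv0 (le_trans ?_ (key 0).1)
    rw [← WithTop.coe_zero, WithTop.coe_le_coe]
    simp [hc.le]
  · intro n hn
    rw [Finsupp.add_apply, shiftA_apply]
    rcases eq_or_ne n n₀ with rfl | hne
    · rw [hcancel n rfl, (hval_top 0).2 rfl]
      exact le_top
    · exact le_val_add val hval_add (hinv n hn) (key n).1
  · intro n hne0 hne1
    rw [Finsupp.add_apply, shiftA_apply]
    rcases eq_or_ne n n₀ with rfl | hne
    · rw [hcancel n rfl, (hval_top 0).2 rfl]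
      exact le_top
    · exact le_val_add val hval_add (min_le_left _ _)
        (le_trans (min_le_right _ _) ((key n).2 hne0 hne1))

end Step


section Sweep

variable {k : Type*} [Field k]

/-- the set of "bad" (not yet clean) positions -/
noncomputable def badSet (val : k → WithTop ℝ) (p₁ μ c : ℝ) (h : ℤ →₀ k) : Finset ℤ :=
  @Finset.filter _ (fun n => val (h n) < (((n : ℝ) * p₁ + c + μ : ℝ) : WithTop ℝ))
    (Classical.decPred _) (h.support.erase 0)

lemma mem_badSet {val : k → WithTop ℝ} {p₁ μ c : ℝ} {h : ℤ →₀ k} {n : ℤ} :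
    n ∈ badSet val p₁ μ c h ↔
      n ≠ 0 ∧ h n ≠ 0 ∧ val (h n) < (((n : ℝ) * p₁ + c + μ : ℝ) : WithTop ℝ) := by
  simp only [badSet, Finset.mem_filter, Finset.mem_erase, Finsupp.mem_support_iff]
  tauto

/-- termination measure -/
noncomputable def Mfun (val : k → WithTop ℝ) (p₁ μ c : ℝ) (h : ℤ →₀ k) : ℕ :=
  (badSet val p₁ μ c h).sum phi

lemma sweep
    (val : k → WithTop ℝ)
    (hval_mul : ∀ a b : k, val (a * b) = val a + val b)
    (hval_add : ∀ a b : k, min (val a) (val b) ≤ val (a + b))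
    (hval_top : ∀ a : k, val a = ⊤ ↔ a = 0)
    (A : ℤ →₀ k) (p₁ μ : ℝ) (hμ : 0 < μ)
    (hA0 : val (A 0) = ((0 : ℝ) : WithTop ℝ))
    (hA1 : val (A 1) = ((p₁ : ℝ) : WithTop ℝ))
    (hAs : ∀ s : ℤ, s ≠ 0 → s ≠ 1 → (((s : ℝ) * p₁ + μ : ℝ) : WithTop ℝ) ≤ val (A s))
    (c : ℝ) (hc : 0 < c) :
    ∀ N : ℕ, ∀ h : ℤ →₀ k, Mfun val p₁ μ c h ≤ N →
      (0 : WithTop ℝ) ≤ val (h 0) →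
      (∀ n : ℤ, n ≠ 0 → (((n : ℝ) * p₁ + c : ℝ) : WithTop ℝ) ≤ val (h n)) →
      ∃ Q : ℤ →₀ k,
        (0 : WithTop ℝ) ≤ val ((h + convA A Q) 0) ∧
        ∀ n : ℤ, n ≠ 0 →
          (((n : ℝ) * p₁ + (c + μ) : ℝ) : WithTop ℝ) ≤ val ((h + convA A Q) n) := by
  intro N
  induction N with
  | zero =>
    intro h hM h0 hinv
    refine ⟨0, ?_⟩
    rw [convA_zero, add_zero]
    refine ⟨h0, fun n hn => ?_⟩
    rcases eq_or_ne (h n) 0 with hz | hz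
    · rw [hz, (hval_top 0).2 rfl]; exact le_top
    · by_contra hlt
      push_neg at hlt
      have hmem : n ∈ badSet val p₁ μ c h := mem_badSet.2 ⟨hn, hz, by
        rw [show (n : ℝ) * p₁ + c + μ = (n : ℝ) * p₁ + (c + μ) by ring]; exact hlt⟩
      have : phi n ≤ Mfun val p₁ μ c h :=
        Finset.single_le_sum (fun i _ => Nat.zero_le _) hmem
      have := phi_pos hn
      omega
  | succ N IH =>
    intro h hM h0 hinv
    by_cases hB : badSet val p₁ μ c h = ∅
    · refine ⟨0, ?_⟩
      rw [convA_zero, add_zero]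
      refine ⟨h0, fun n hn => ?_⟩
      rcases eq_or_ne (h n) 0 with hz | hz
      · rw [hz, (hval_top 0).2 rfl]; exact le_top
      · by_contra hlt
        push_neg at hlt
        have hmem : n ∈ badSet val p₁ μ c h := mem_badSet.2 ⟨hn, hz, by
          rw [show (n : ℝ) * p₁ + c + μ = (n : ℝ) * p₁ + (c + μ) by ring]; exact hlt⟩
        rw [hB] at hmem
        exact absurd hmem (Finset.notMem_empty n)
    · obtain ⟨n₀, hn₀mem⟩ := Finset.nonempty_of_ne_empty hB
      obtain ⟨hn₀, hn₀z, hn₀bad⟩ := mem_badSet.1 hn₀mem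
      set j : ℤ := if 0 < n₀ then 1 else 0 with hjdef
      set carry : ℤ := if 0 < n₀ then n₀ - 1 else n₀ + 1 with hcarrydef
      have hj : val (A j) = (((j : ℝ) * p₁ : ℝ) : WithTop ℝ) := by
        rw [hjdef]
        split
        · rw [hA1, WithTop.coe_inj]; push_cast; ring
        · rw [hA0, WithTop.coe_inj]; push_cast; ring
      obtain ⟨t, Hc, H0, Hinv, Hmin⟩ :=
        step val hval_mul hval_add hval_top A p₁ μ hμ hA0 hA1 hAs c hc h h0 hinv n₀ hn₀ j hj
      set h' : ℤ →₀ k := h + shiftA A (n₀ - j) t with hh'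
      have hspots : ∀ n : ℤ, n ≠ n₀ → n ≠ carry → n ≠ n₀ - j ∧ n ≠ n₀ - j + 1 := by
        intro n h1 h2
        rw [hjdef]
        rw [hcarrydef] at h2
        split at h2 <;> constructor <;> omega
      have hsub : badSet val p₁ μ c h' ⊆ insert carry ((badSet val p₁ μ c h).erase n₀) := by
        intro n hn
        obtain ⟨hn0, hnz, hnbad⟩ := mem_badSet.1 hn
        rcases eq_or_ne n n₀ with rfl | hne
        · exact absurd Hc hnz
        rcases eq_or_ne n carry with rfl | hnec
        · exact Finset.mem_insert_self _ _
        obtain ⟨hs1, hs2⟩ := hspots n hne hnec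
        have hminle := Hmin n hs1 hs2
        have hvn : val (h n) < (((n : ℝ) * p₁ + c + μ : ℝ) : WithTop ℝ) := by
          by_contra hge
          push_neg at hge
          have : (((n : ℝ) * p₁ + c + μ : ℝ) : WithTop ℝ) ≤ val (h' n) :=
            le_trans (le_min hge le_rfl) hminle
          exact absurd (lt_of_le_of_lt this hnbad) (lt_irrefl _)
        have hhz : h n ≠ 0 := by
          intro hz
          rw [hz, (hval_top 0).2 rfl] at hvn
          exact absurd hvn (not_top_lt)
        exact Finset.mem_insert_of_mem (Finset.mem_erase.2 ⟨hne, mem_badSet.2 ⟨hn0, hhz, hvn⟩⟩)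
      have hMdec : Mfun val p₁ μ c h' ≤ N := by
        have h1 : Mfun val p₁ μ c h' ≤
            ∑ x ∈ insert carry ((badSet val p₁ μ c h).erase n₀), phi x :=
          Finset.sum_le_sum_of_subset hsub
        have h2 : ∑ x ∈ insert carry ((badSet val p₁ μ c h).erase n₀), phi x ≤
            phi carry + ∑ x ∈ (badSet val p₁ μ c h).erase n₀, phi x := by
          by_cases hmem : carry ∈ (badSet val p₁ μ c h).erase n₀
          · rw [Finset.insert_eq_self.2 hmem]
            exact Nat.le_add_left _ _
          · rw [Finset.sum_insert hmem]
        have h3 : ∑ x ∈ (badSet val p₁ μ c h).erase n₀, phi x + phi n₀ =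
            Mfun val p₁ μ c h :=
          Finset.sum_erase_add _ _ hn₀mem
        have h4 : phi carry < phi n₀ := by
          rw [hcarrydef]; exact phi_carry hn₀
        have h5 : Mfun val p₁ μ c h' ≤
            phi carry + ∑ x ∈ (badSet val p₁ μ c h).erase n₀, phi x := le_trans h1 h2
        omega
      obtain ⟨Q', HQ'⟩ := IH h' hMdec H0 Hinv
      refine ⟨Finsupp.single (n₀ - j) t + Q', ?_⟩
      rw [convA_add, convA_single, ← add_assoc]
      exact HQ'

end Sweep


section Iterate

variable {k : Type*} [Field k]

lemma iterate
    (val : k → WithTop ℝ)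
    (hval_mul : ∀ a b : k, val (a * b) = val a + val b)
    (hval_add : ∀ a b : k, min (val a) (val b) ≤ val (a + b))
    (hval_top : ∀ a : k, val a = ⊤ ↔ a = 0)
    (A : ℤ →₀ k) (p₁ μ : ℝ) (hμ : 0 < μ)
    (hA0 : val (A 0) = ((0 : ℝ) : WithTop ℝ))
    (hA1 : val (A 1) = ((p₁ : ℝ) : WithTop ℝ))
    (hAs : ∀ s : ℤ, s ≠ 0 → s ≠ 1 → (((s : ℝ) * p₁ + μ : ℝ) : WithTop ℝ) ≤ val (A s))
    (c : ℝ) (hc : 0 < c)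
    (h : ℤ →₀ k)
    (h0 : (0 : WithTop ℝ) ≤ val (h 0))
    (hinv : ∀ n : ℤ, n ≠ 0 → (((n : ℝ) * p₁ + c : ℝ) : WithTop ℝ) ≤ val (h n)) :
    ∀ jN : ℕ, ∃ Q : ℤ →₀ k,
      (0 : WithTop ℝ) ≤ val ((h + convA A Q) 0) ∧
      ∀ n : ℤ, n ≠ 0 →
        (((n : ℝ) * p₁ + (c + (jN : ℝ) * μ) : ℝ) : WithTop ℝ) ≤ val ((h + convA A Q) n) := by
  intro jN
  induction jN with
  | zero =>
    refine ⟨0, ?_⟩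
    rw [convA_zero, add_zero]
    refine ⟨h0, fun n hn => ?_⟩
    rw [show (n : ℝ) * p₁ + (c + (0 : ℕ) * μ) = (n : ℝ) * p₁ + c by push_cast; ring]
    exact hinv n hn
  | succ jN IH =>
    obtain ⟨Q, hQ0, hQ⟩ := IH
    have hc' : 0 < c + (jN : ℝ) * μ := by positivity
    obtain ⟨Q', hQ'0, hQ'⟩ := sweep val hval_mul hval_add hval_top A p₁ μ hμ hA0 hA1 hAs
      (c + (jN : ℝ) * μ) hc' (Mfun val p₁ μ (c + (jN : ℝ) * μ) (h + convA A Q))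
      (h + convA A Q) le_rfl hQ0 hQ
    refine ⟨Q + Q', ?_, fun n hn => ?_⟩
    · rw [convA_add, ← add_assoc h (convA A Q) (convA A Q')]
      exact hQ'0
    · rw [convA_add, ← add_assoc h (convA A Q) (convA A Q')]
      refine le_trans (le_of_eq ?_) (hQ' n hn)
      rw [WithTop.coe_inj]; push_cast; ring

end Iterate

end Stmt12Aux

open Stmt12Aux

theorem stmt12 {k : Type*} [Field k] (val : k → WithTop ℝ)
    (hval_mul : ∀ a b : k, val (a * b) = val a + val b)
    (hval_add : ∀ a b : k, min (val a) (val b) ≤ val (a + b))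
    (hval_top : ∀ a : k, val a = ⊤ ↔ a = 0)
    (lam : ℝ) (hlam : 0 ≤ lam)
    (f g : (ℤ × ℤ) →₀ k) (p₁ : ℝ)
    (hf00 : val (f (0, 0)) = (0 : WithTop ℝ)) (hg00 : val (g (0, 0)) = (0 : WithTop ℝ))
    (hf10 : val (f (1, 0)) = (p₁ : WithTop ℝ)) (hg10 : val (g (1, 0)) = (p₁ : WithTop ℝ))
    (hf : ∀ n : ℤ, n ≠ 0 → n ≠ 1 → (((n : ℝ) * p₁ : ℝ) : WithTop ℝ) < val (f (n, 0)))
    (hg : ∀ n : ℤ, n ≠ 0 → n ≠ 1 → (((n : ℝ) * p₁ : ℝ) : WithTop ℝ) < val (g (n, 0))) :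
    ∃ q : (ℤ × ℤ) →₀ k,
      (g (1, 0) + q.sum fun s c => c * f ((1, 0) - s)) = 0 ∧
      (0 : WithTop ℝ) ≤ val (g (0, 0) + q.sum fun s c => c * f ((0, 0) - s)) ∧
      ∀ n : ℤ, n ≠ 0 →
        (((n : ℝ) * p₁ + lam : ℝ) : WithTop ℝ) <
          val (g (n, 0) + q.sum fun s c => c * f ((n, 0) - s)) := by
  classical
  have hinj : Function.Injective (fun m : ℤ => ((m, 0) : ℤ × ℤ)) := by
    intro a b hab
    simpa using hab
  set A : ℤ →₀ k := Finsupp.comapDomain _ f hinj.injOn with hAdef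
  set B : ℤ →₀ k := Finsupp.comapDomain _ g hinj.injOn with hBdef
  have hA : ∀ n : ℤ, A n = f (n, 0) := fun n => rfl
  have hB : ∀ n : ℤ, B n = g (n, 0) := fun n => rfl
  have hA0 : val (A 0) = ((0 : ℝ) : WithTop ℝ) := by rw [hA]; simpa using hf00
  have hA1 : val (A 1) = ((p₁ : ℝ) : WithTop ℝ) := by rw [hA]; exact hf10
  have hB0 : val (B 0) = ((0 : ℝ) : WithTop ℝ) := by rw [hB]; simpa using hg00
  have hB1 : val (B 1) = ((p₁ : ℝ) : WithTop ℝ) := by rw [hB]; exact hg10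
  have hA1ne : A 1 ≠ 0 := by
    intro H
    rw [H, (hval_top 0).2 rfl] at hA1
    exact (WithTop.coe_ne_top (a := p₁)) hA1.symm
  -- get the gap μ for the coefficients of f
  obtain ⟨μ, hμ, hμS⟩ := exists_eps ((A.support.erase 1).erase 0)
    (fun s => (s : ℝ) * p₁) (fun s => val (A s)) (by
      intro i hi
      rw [Finset.mem_erase, Finset.mem_erase] at hi
      show (((i : ℝ) * p₁ : ℝ) : WithTop ℝ) < val (A i)
      rw [hA]
      exact hf i hi.1 hi.2.1)
  have hAs : ∀ s : ℤ, s ≠ 0 → s ≠ 1 →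
      (((s : ℝ) * p₁ + μ : ℝ) : WithTop ℝ) ≤ val (A s) := by
    intro s hs0 hs1
    rcases eq_or_ne (A s) 0 with hz | hz
    · rw [hz, (hval_top 0).2 rfl]; exact le_top
    · exact hμS s (by
        rw [Finset.mem_erase, Finset.mem_erase, Finsupp.mem_support_iff]
        exact ⟨hs0, hs1, hz⟩)
  -- first move: kill coefficient 1 of B
  set t₀ : k := -(B 1 / A 1) with ht₀
  set h₀ : ℤ →₀ k := B + shiftA A 0 t₀ with hh₀
  have h₀app : ∀ n : ℤ, h₀ n = B n + t₀ * A n := by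
    intro n
    rw [hh₀, Finsupp.add_apply, shiftA_apply, sub_zero]
  have hvt₀ : ((0 : ℝ) : WithTop ℝ) ≤ val t₀ := by
    have := val_neg_div val hval_mul hval_top (le_of_eq hB1.symm) hA1
    simpa using this
  have h₀1 : h₀ 1 = 0 := by
    rw [h₀app, ht₀]
    field_simp
    ring
  have h₀0 : (0 : WithTop ℝ) ≤ val (h₀ 0) := by
    rw [h₀app]
    refine le_val_add val hval_add (le_of_eq ?_) ?_
    · rw [hB0]; simp
    · have := le_val_mul val hval_mul hvt₀ (le_of_eq hA0.symm)
      simpa using this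
  have h₀strict : ∀ n : ℤ, n ≠ 0 → n ≠ 1 →
      (((n : ℝ) * p₁ : ℝ) : WithTop ℝ) < val (h₀ n) := by
    intro n hn0 hn1
    rw [h₀app]
    have hBn : (((n : ℝ) * p₁ : ℝ) : WithTop ℝ) < val (B n) := by
      rw [hB]; exact hg n hn0 hn1
    have hAn : (((n : ℝ) * p₁ : ℝ) : WithTop ℝ) < val (t₀ * A n) := by
      rw [hval_mul]
      calc (((n : ℝ) * p₁ : ℝ) : WithTop ℝ) < val (A n) := by rw [hA]; exact hf n hn0 hn1
        _ = 0 + val (A n) := by rw [zero_add]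
        _ ≤ val t₀ + val (A n) := by
            refine add_le_add ?_ le_rfl
            simpa using hvt₀
    exact lt_of_lt_of_le (lt_min hBn hAn) (hval_add _ _)
  -- get the initial gap ε
  obtain ⟨ε, hε, hεS⟩ := exists_eps (h₀.support.erase 0)
    (fun n => (n : ℝ) * p₁) (fun n => val (h₀ n)) (by
      intro i hi
      rw [Finset.mem_erase, Finsupp.mem_support_iff] at hi
      rcases eq_or_ne i 1 with rfl | hi1
      · exact absurd h₀1 hi.2
      · exact h₀strict i hi.1 hi1)
  have h₀inv : ∀ n : ℤ, n ≠ 0 → (((n : ℝ) * p₁ + ε : ℝ) : WithTop ℝ) ≤ val (h₀ n) := by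
    intro n hn
    rcases eq_or_ne (h₀ n) 0 with hz | hz
    · rw [hz, (hval_top 0).2 rfl]; exact le_top
    · exact hεS n (by rw [Finset.mem_erase, Finsupp.mem_support_iff]; exact ⟨hn, hz⟩)
  -- iterate sweeps to reach level lam + 1
  obtain ⟨jN, hjN⟩ := exists_nat_ge ((lam + 1 - ε) / μ)
  have hclam : lam + 1 ≤ ε + (jN : ℝ) * μ := by
    have := (div_le_iff₀ hμ).1 hjN
    linarith
  obtain ⟨Q₁, hQ₁0, hQ₁⟩ := iterate val hval_mul hval_add hval_top A p₁ μ hμ hA0 hA1 hAs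
    ε hε h₀ h₀0 h₀inv jN
  set c : ℝ := ε + (jN : ℝ) * μ with hcdef
  have hc : 0 < c := by positivity
  set h₁ : ℤ →₀ k := h₀ + convA A Q₁ with hh₁
  have h₁0 : (0 : WithTop ℝ) ≤ val (h₁ 0) := hQ₁0
  have h₁inv : ∀ n : ℤ, n ≠ 0 → (((n : ℝ) * p₁ + c : ℝ) : WithTop ℝ) ≤ val (h₁ n) := hQ₁
  -- final move: kill coefficient 1 exactly
  set t₁ : k := -(h₁ 1 / A 1) with ht₁
  set h₂ : ℤ →₀ k := h₁ + shiftA A 0 t₁ with hh₂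
  have h₂app : ∀ n : ℤ, h₂ n = h₁ n + t₁ * A n := by
    intro n
    rw [hh₂, Finsupp.add_apply, shiftA_apply, sub_zero]
  have hvt₁ : ((c : ℝ) : WithTop ℝ) ≤ val t₁ := by
    have h1v : ((((1 : ℤ) : ℝ) * p₁ + c : ℝ) : WithTop ℝ) ≤ val (h₁ 1) := h₁inv 1 one_ne_zero
    have := val_neg_div val hval_mul hval_top h1v hA1
    refine le_trans (le_of_eq ?_) this
    rw [WithTop.coe_inj]; push_cast; ring
  have h₂1 : h₂ 1 = 0 := by
    rw [h₂app, ht₁]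
    field_simp
    ring
  have h₂0 : (0 : WithTop ℝ) ≤ val (h₂ 0) := by
    rw [h₂app]
    refine le_val_add val hval_add h₁0 ?_
    have := le_val_mul val hval_mul hvt₁ (le_of_eq hA0.symm)
    refine le_trans ?_ this
    rw [← WithTop.coe_zero, WithTop.coe_le_coe]
    linarith
  have h₂final : ∀ n : ℤ, n ≠ 0 →
      (((n : ℝ) * p₁ + lam : ℝ) : WithTop ℝ) < val (h₂ n) := by
    intro n hn
    rcases eq_or_ne n 1 with rfl | hn1
    · rw [h₂1, (hval_top 0).2 rfl]
      exact WithTop.coe_lt_top _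
    · have hgoal : (((n : ℝ) * p₁ + lam + 1 : ℝ) : WithTop ℝ) ≤ val (h₂ n) := by
        rw [h₂app]
        refine le_val_add val hval_add ?_ ?_
        · refine le_trans ?_ (h₁inv n hn)
          rw [WithTop.coe_le_coe]; linarith
        · rcases eq_or_ne (A n) 0 with hz | hz
          · rw [hz, mul_zero, (hval_top 0).2 rfl]; exact le_top
          · have := le_val_mul val hval_mul hvt₁ (hAs n hn hn1)
            refine le_trans ?_ this
            rw [WithTop.coe_le_coe]; linarith
      refine lt_of_lt_of_le ?_ hgoal
      rw [WithTop.coe_lt_coe]; linarith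
  -- assemble the witness
  set Qtot : ℤ →₀ k := (Finsupp.single 0 t₀ + Q₁) + Finsupp.single 0 t₁ with hQtot
  have hh₂eq : h₂ = B + convA A Qtot := by
    rw [hQtot, convA_add, convA_add, convA_single, convA_single, hh₂, hh₁, hh₀]
    abel
  refine ⟨Finsupp.embDomain ⟨fun m : ℤ => ((m, 0) : ℤ × ℤ), hinj⟩ Qtot, ?_⟩
  have hexpr : ∀ n : ℤ,
      (g (n, 0) + (Finsupp.embDomain ⟨fun m : ℤ => ((m, 0) : ℤ × ℤ), hinj⟩ Qtot).sum
        fun s c => c * f ((n, 0) - s)) = h₂ n := by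
    intro n
    rw [Finsupp.sum_embDomain]
    simp only [Function.Embedding.coeFn_mk]
    have : (Qtot.sum fun m c => c * f (((n, 0) : ℤ × ℤ) - (m, 0))) =
        Qtot.sum fun m c => c * A (n - m) := by
      refine Finset.sum_congr rfl fun m _ => ?_
      have hpt : ((n, 0) : ℤ × ℤ) - (m, 0) = (n - m, 0) := by simp
      dsimp only
      rw [hpt, hA]
    rw [this, ← convA_apply, hh₂eq, Finsupp.add_apply, hB]
  refine ⟨?_, ?_, ?_⟩
  · rw [hexpr 1]
    exact h₂1
  · rw [hexpr 0]
    exact h₂0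
  · intro n hn
    rw [hexpr n]
    exact h₂final n hn
end
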